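/- arXiv:2504.16302 — 10 statements merged into one kernel-verified Lean document; each statement's English description precedes it below -/
import Mathlib

section
/- For every n ≥ 3, the number e_{n,1} := n!·[tⁿ]E1 of leaf-labeled time-consistent galled trees with n leaves and exactly one gall equals (n + 2)·(2n)!/(2ⁿ·n!) − 3·2^{n−1}·n!. -/
/-!
Squaring `U = t + U²/2` gives `(1 - U)² = 1 - 2t`, so `(1 - U)⁻¹` is the series
`S = (1 - 2t)^(-1/2) = ∑ C(2n, n) (t/2)ⁿ`, and `U S = S - 1`. Hence
`E1 = (S - 1)³ / 2 = (S³ - 3S² + 3S - 1) / 2`, where `S² = (1 - 2t)⁻¹ = ∑ 2ⁿ tⁿ` and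
`S³ = S'` because `(1 - 2t) S' = S`. Reading off coefficients gives the formula.
-/

open PowerSeries

namespace GalledTree

section CommRing

variable {R : Type*} [CommRing R]

lemma coeff_succ_one_sub_two_X_mul (f : R⟦X⟧) (n : ℕ) :
    coeff (n + 1) ((1 - 2 * X) * f) = coeff (n + 1) f - 2 * coeff n f := by
  rw [sub_mul, one_mul, map_sub, mul_assoc, ← map_ofNat C 2, coeff_C_mul, mul_comm X,
    coeff_succ_mul_X]

lemma derivative_one_sub_two_X : d⁄dX R (1 - 2 * X) = -2 := by
  simp [← map_ofNat (C (R := R)) 2]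

lemma one_sub_two_X_mul_rescale_two_mk_one : (1 - 2 * X) * rescale (2 : R) (mk 1) = 1 := by
  have h := congrArg (rescale (2 : R)) (mk_one_mul_one_sub_eq_one R)
  rw [map_mul, map_sub, map_one, rescale_X, map_ofNat] at h
  rw [mul_comm, h]

end CommRing

variable {K : Type*} [Field K]

variable (K) in
noncomputable def invSqrtOneSubTwoX : K⟦X⟧ := mk fun n => Nat.centralBinom n / 2 ^ n

local notation "S" => invSqrtOneSubTwoX K

@[simp]
lemma coeff_invSqrtOneSubTwoX (n : ℕ) : coeff n S = Nat.centralBinom n / 2 ^ n :=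
  coeff_mk _ _

lemma constantCoeff_invSqrtOneSubTwoX : constantCoeff S = 1 := by
  simp [← coeff_zero_eq_constantCoeff]

variable [CharZero K]

lemma one_sub_two_X_mul_derivative_invSqrtOneSubTwoX : (1 - 2 * X) * d⁄dX K S = S := by
  ext (_ | n)
  · simp [coeff_zero_eq_constantCoeff_apply, ← coeff_zero_eq_constantCoeff_apply (d⁄dX K S),
      coeff_derivative, Nat.centralBinom_eq_two_mul_choose]
  · simp only [coeff_succ_one_sub_two_X_mul, coeff_derivative, coeff_invSqrtOneSubTwoX]
    have h := congrArg (Nat.cast : ℕ → K) (Nat.succ_mul_centralBinom_succ (n + 1))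
    push_cast at h ⊢
    linear_combination h / 2 ^ (n + 2)

lemma invSqrtOneSubTwoX_sq_mul_one_sub_two_X : S ^ 2 * (1 - 2 * X) = 1 := by
  have hderiv : d⁄dX K (S ^ 2 * (1 - 2 * X)) = d⁄dX K 1 := by
    rw [Derivation.leibniz, Derivation.leibniz_pow, derivative_one_sub_two_X,
      Derivation.map_one_eq_zero, smul_eq_mul, smul_eq_mul, nsmul_eq_mul]
    linear_combination (2 * S) * one_sub_two_X_mul_derivative_invSqrtOneSubTwoX (K := K)
  exact derivative.ext hderiv (by simp [constantCoeff_invSqrtOneSubTwoX])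

lemma invSqrtOneSubTwoX_pow_three : S ^ 3 = d⁄dX K S := by
  calc S ^ 3 = S ^ 2 * (1 - 2 * X) * d⁄dX K S := by
        rw [mul_assoc, one_sub_two_X_mul_derivative_invSqrtOneSubTwoX]; ring
    _ = d⁄dX K S := by rw [invSqrtOneSubTwoX_sq_mul_one_sub_two_X, one_mul]

lemma invSqrtOneSubTwoX_sq : S ^ 2 = rescale 2 (mk 1) := by
  calc S ^ 2 = S ^ 2 * ((1 - 2 * X) * rescale 2 (mk 1)) := by
        rw [one_sub_two_X_mul_rescale_two_mk_one, mul_one]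
    _ = rescale 2 (mk 1) := by rw [← mul_assoc, invSqrtOneSubTwoX_sq_mul_one_sub_two_X, one_mul]

lemma coeff_invSqrtOneSubTwoX_sq (n : ℕ) : coeff n (S ^ 2) = 2 ^ n := by
  simp [invSqrtOneSubTwoX_sq, coeff_rescale]

lemma coeff_invSqrtOneSubTwoX_pow_three (n : ℕ) :
    coeff n (S ^ 3) = (2 * n + 1 : K) * Nat.centralBinom n / 2 ^ n := by
  have h := congrArg (Nat.cast : ℕ → K) (Nat.succ_mul_centralBinom_succ n)
  push_cast at h
  rw [invSqrtOneSubTwoX_pow_three, coeff_derivative, coeff_invSqrtOneSubTwoX, pow_succ]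
  field_simp
  linear_combination h

lemma coeff_succ_invSqrtOneSubTwoX_sub_one_pow_three (n : ℕ) :
    coeff (n + 1) ((S - 1) ^ 3) =
      (2 * (n + 3) : K) * Nat.centralBinom (n + 1) / 2 ^ (n + 1) - 3 * 2 ^ (n + 1) := by
  have hcube : (S - 1) ^ 3 = S ^ 3 - 3 * S ^ 2 + 3 * S - 1 := by ring
  simp only [hcube, map_sub, map_add, ← map_ofNat C 3, coeff_C_mul, coeff_one,
    coeff_invSqrtOneSubTwoX_pow_three, coeff_invSqrtOneSubTwoX_sq, coeff_invSqrtOneSubTwoX]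
  push_cast
  ring

lemma eq_one_of_sq_eq_one {f : K⟦X⟧} (h : f ^ 2 = 1) (hc : constantCoeff f = 1) : f = 1 := by
  refine (sq_eq_one_iff.mp h).resolve_right ?_
  rintro rfl
  norm_num at hc

lemma invSqrtOneSubTwoX_mul_one_sub {U : K⟦X⟧} (h0 : constantCoeff U = 0)
    (hU : U = X + (1 / 2 : K) • U ^ 2) : S * (1 - U) = 1 := by
  have hsq : (1 - U) ^ 2 = 1 - 2 * X := by
    rw [smul_eq_C_mul] at hU
    have hhalf : C (1 / 2 : K) * 2 = 1 := by
      rw [← map_ofNat C 2, ← map_mul]; norm_num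
    linear_combination (-2 : K⟦X⟧) * hU - U ^ 2 * hhalf
  refine eq_one_of_sq_eq_one ?_ (by simp [constantCoeff_invSqrtOneSubTwoX, h0])
  rw [mul_pow, hsq, invSqrtOneSubTwoX_sq_mul_one_sub_two_X]

end GalledTree

open GalledTree

/-- For `n ≥ 3`, the number `e_{n,1} = n!·[tⁿ]E1` of leaf-labeled time-consistent
galled trees with `n` leaves and exactly one gall equals
`(n+2)·(2n)!/(2ⁿ·n!) - 3·2^(n-1)·n!`, where `E1 = (1/2)·U³·(1-U)⁻³` and `U` is the
unique series with zero constant coefficient satisfying `U = t + U²/2`. -/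
theorem stmt_3 (U E1 : PowerSeries ℚ) (h0 : constantCoeff U = 0)
    (hU : U = PowerSeries.X + (1 / 2 : ℚ) • U ^ 2)
    (hE1 : E1 = (1 / 2 : ℚ) • (U ^ 3 * ((1 - U)⁻¹) ^ 3)) :
    ∀ n : ℕ, 3 ≤ n →
      (n.factorial : ℚ) * coeff n E1
        = ((n : ℚ) + 2) * (2 * n).factorial / (2 ^ n * n.factorial)
          - 3 * 2 ^ (n - 1) * n.factorial := by
  intro n hn
  obtain ⟨m, rfl⟩ : ∃ m, n = m + 1 := ⟨n - 1, by omega⟩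
  have hS := invSqrtOneSubTwoX_mul_one_sub h0 hU
  have hinv : (1 - U)⁻¹ = invSqrtOneSubTwoX ℚ :=
    (inv_eq_iff_mul_eq_one (by simp [h0])).mpr hS
  have hE1S : E1 = (1 / 2 : ℚ) • (invSqrtOneSubTwoX ℚ - 1) ^ 3 := by
    rw [hE1, hinv, ← mul_pow]
    congr 2
    linear_combination -hS
  have hbinom : (Nat.centralBinom (m + 1) : ℚ) =
      (2 * (m + 1)).factorial / (m + 1).factorial ^ 2 := by
    rw [Nat.centralBinom_eq_two_mul_choose, two_mul, Nat.cast_add_choose, sq]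
  rw [hE1S, map_smul, coeff_succ_invSqrtOneSubTwoX_sub_one_pow_three, hbinom,
    Nat.add_sub_cancel, smul_eq_mul]
  field_simp
  push_cast
  ring
end

section
/- As n → ∞, the number e_{n,1} := n!·[tⁿ]E1 of leaf-labeled time-consistent galled trees with n leaves and exactly one gall satisfies the asymptotic equivalence e_{n,1} ~ (n^{1/2}/√π)·2ⁿ·n! (equivalently, e_{n,1} ~ √2·n^{n+1}·(2/e)ⁿ), in the sense that the ratio of the two sides tends to 1. -/
/-!
From `U = X + U²/2` one gets `(1 - U)² = 1 - 2X`, so `A = (1 - U)⁻¹` is `(1 - 2X)^(-1/2)` and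
`E1 = (A - 1)³/2`. Differentiating `A²(1 - 2X) = 1` gives `(1 - 2X)A' = A`, hence `A' = A³` and
`(n + 1)aₙ₊₁ = (2n + 1)aₙ` for `aₙ = [Xⁿ]A`, i.e. `aₙ = C(2n, n)/2ⁿ`. Together with `[Xⁿ]A² = 2ⁿ`
this gives `[Xⁿ]E1 = (n + 2)C(2n, n)/2ⁿ - 3·2ⁿ/2` for `n ≥ 1`. For the Stirling sequence `s`,
`C(2n, n)√n/4ⁿ = s(2n)/s(n)² → 1/√π`, which yields the first asymptotic; the second differs from
the first by the factor `s(n)/√π → 1`.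
-/

open PowerSeries Filter Real Topology Nat

namespace PowerSeries

theorem coeff_eq_pow_of_mul_one_sub_C_mul_X_eq_one {R : Type*} [CommRing R] {G : R⟦X⟧} {a : R}
    (h : G * (1 - C a * X) = 1) (n : ℕ) : coeff n G = a ^ n := by
  induction n with
  | zero => simpa using congrArg constantCoeff h
  | succ n ih =>
    have hn := congrArg (coeff (n + 1)) h
    rw [mul_sub, mul_one, mul_left_comm, ← mul_assoc, map_sub, coeff_succ_mul_X, coeff_C_mul,
      coeff_one, if_neg n.succ_ne_zero, ih] at hn
    rw [pow_succ]
    linear_combination hn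

theorem succ_mul_coeff_succ_of_one_sub_C_mul_X_mul_derivative {R : Type*} [CommRing R]
    {F : R⟦X⟧} {a c : R} (h : (1 - C a * X) * d⁄dX R F = C c * F) (n : ℕ) :
    (n + 1) * coeff (n + 1) F = (a * n + c) * coeff n F := by
  have hn := congrArg (coeff n) h
  rw [sub_mul, one_mul, mul_assoc, map_sub, coeff_C_mul, coeff_C_mul, coeff_derivative] at hn
  cases n with
  | zero => simpa [mul_comm] using hn
  | succ n =>
    rw [coeff_succ_X_mul, coeff_derivative] at hn
    push_cast at hn ⊢
    linear_combination hn

section InvSqrtOneSubTwoX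

variable {K : Type*} [Field K] [CharZero K] {A : K⟦X⟧}

theorem one_sub_two_mul_X_mul_derivative_of_sq_mul_eq_one (hA : A ^ 2 * (1 - 2 * X) = 1) :
    (1 - 2 * X) * d⁄dX K A = A := by
  have h2 : (2 : K⟦X⟧) ≠ 0 := by
    rw [← map_ofNat C 2]; exact (map_ne_zero_iff _ C_injective).mpr two_ne_zero
  have hA_ne : A ≠ 0 := by rintro rfl; simp at hA
  have hD_lin : d⁄dX K (1 - 2 * X) = -2 := by
    rw [map_sub, Derivation.map_one_eq_zero, ← map_ofNat C 2, Derivation.leibniz]; simp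
  have hD := congrArg (d⁄dX K) hA
  rw [Derivation.leibniz, Derivation.leibniz_pow, hD_lin, Derivation.map_one_eq_zero] at hD
  simp only [smul_eq_mul, nsmul_eq_mul] at hD
  apply mul_left_cancel₀ (mul_ne_zero h2 hA_ne)
  linear_combination hD

theorem derivative_eq_pow_three_of_sq_mul_eq_one (hA : A ^ 2 * (1 - 2 * X) = 1) :
    d⁄dX K A = A ^ 3 := by
  calc d⁄dX K A = A ^ 2 * ((1 - 2 * X) * d⁄dX K A) := by
        linear_combination (d⁄dX K A) * hA.symm
    _ = A ^ 3 := by rw [one_sub_two_mul_X_mul_derivative_of_sq_mul_eq_one hA]; ring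

theorem succ_mul_coeff_succ_of_sq_mul_eq_one (hA : A ^ 2 * (1 - 2 * X) = 1) (n : ℕ) :
    (n + 1) * coeff (n + 1) A = (2 * n + 1) * coeff n A :=
  succ_mul_coeff_succ_of_one_sub_C_mul_X_mul_derivative
    (by rw [map_ofNat, map_one, one_mul]
        exact one_sub_two_mul_X_mul_derivative_of_sq_mul_eq_one hA) n

theorem coeff_eq_centralBinom_div_two_pow (hA : A ^ 2 * (1 - 2 * X) = 1)
    (hA0 : constantCoeff A = 1) (n : ℕ) :
    coeff n A = n.centralBinom / 2 ^ n := by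
  induction n with
  | zero => simpa using hA0
  | succ n ih =>
    have hbinom : ((n + 1 : ℕ) : K) * (n + 1).centralBinom =
        2 * (2 * n + 1) * n.centralBinom := by
      exact_mod_cast Nat.succ_mul_centralBinom_succ n
    apply mul_left_cancel₀ (n.cast_add_one_ne_zero (R := K))
    rw [succ_mul_coeff_succ_of_sq_mul_eq_one hA, ih, pow_succ]
    push_cast at hbinom ⊢
    field_simp
    linear_combination -hbinom

theorem coeff_half_smul_sub_one_pow_three (hA : A ^ 2 * (1 - 2 * X) = 1)
    (hA0 : constantCoeff A = 1) {n : ℕ} (hn : n ≠ 0) :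
    coeff n ((1 / 2 : K) • (A - 1) ^ 3) =
      ((n : K) + 2) * n.centralBinom / 2 ^ n - 3 * 2 ^ n / 2 := by
  have hcube : (A - 1) ^ 3 = d⁄dX K A - C 3 * A ^ 2 + C 3 * A - 1 := by
    rw [derivative_eq_pow_three_of_sq_mul_eq_one hA, map_ofNat]; ring
  have hsq : coeff n (A ^ 2) = 2 ^ n :=
    coeff_eq_pow_of_mul_one_sub_C_mul_X_eq_one (by rwa [map_ofNat]) n
  rw [coeff_smul, hcube, map_sub, map_add, map_sub, coeff_C_mul, coeff_C_mul, coeff_derivative,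
    mul_comm, succ_mul_coeff_succ_of_sq_mul_eq_one hA, coeff_one, if_neg hn, hsq,
    coeff_eq_centralBinom_div_two_pow hA hA0, smul_eq_mul]
  ring

end InvSqrtOneSubTwoX

section TreeEquation

variable {K : Type*} [Field K] {U : K⟦X⟧}

theorem mul_inv_one_sub (h0 : constantCoeff U = 0) : U * (1 - U)⁻¹ = (1 - U)⁻¹ - 1 := by
  linear_combination (-1 : K⟦X⟧) * PowerSeries.mul_inv_cancel (1 - U) (by simp [h0])

theorem constantCoeff_inv_one_sub (h0 : constantCoeff U = 0) : constantCoeff (1 - U)⁻¹ = 1 := by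
  simp [constantCoeff_inv, h0]

variable [CharZero K]

theorem one_sub_sq_of_eq_X_add_half_smul_sq (hU : U = X + (1 / 2 : K) • U ^ 2) :
    (1 - U) ^ 2 = 1 - 2 * X := by
  have h2 : C (1 / 2 : K) * 2 = 1 := by rw [← map_ofNat C 2, ← map_mul]; norm_num
  rw [smul_eq_C_mul] at hU
  linear_combination (-2) * hU - U ^ 2 * h2

theorem sq_inv_one_sub_mul_one_sub_two_mul_X (h0 : constantCoeff U = 0)
    (hU : U = X + (1 / 2 : K) • U ^ 2) : ((1 - U)⁻¹) ^ 2 * (1 - 2 * X) = 1 := by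
  rw [← one_sub_sq_of_eq_X_add_half_smul_sq hU, ← mul_pow,
    PowerSeries.inv_mul_cancel _ (by simp [h0]), one_pow]

end TreeEquation

end PowerSeries

theorem Nat.centralBinom_mul_factorial_sq (n : ℕ) : n.centralBinom * n ! ^ 2 = (2 * n)! := by
  rw [centralBinom_eq_two_mul_choose, sq, ← mul_assoc]
  convert choose_mul_factorial_mul_factorial (by omega : n ≤ 2 * n) using 3
  omega

theorem centralBinom_mul_sqrt_div_four_pow_eq {n : ℕ} (hn : n ≠ 0) :
    (n.centralBinom : ℝ) * √n / 4 ^ n =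
      Stirling.stirlingSeq (2 * n) / Stirling.stirlingSeq n ^ 2 := by
  have hfac : (n.centralBinom : ℝ) = (2 * n)! / n ! ^ 2 := by
    rw [eq_div_iff (by positivity)]; exact_mod_cast centralBinom_mul_factorial_sq n
  have hn' : (0 : ℝ) < n := by positivity
  simp only [Stirling.stirlingSeq, hfac]
  push_cast
  have hpow : (2 * n / exp 1 : ℝ) ^ (2 * n) = 4 ^ n * ((n / exp 1) ^ n) ^ 2 := by
    rw [mul_div_assoc, mul_pow, pow_mul (2 : ℝ) 2 n, pow_mul']; norm_num
  rw [show (2 * (2 * n : ℝ)) = 2 ^ 2 * n by ring, sqrt_mul (by norm_num), sqrt_sq (by norm_num),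
    hpow, sqrt_mul zero_le_two]
  field_simp
  rw [sq_sqrt zero_le_two]

theorem tendsto_centralBinom_mul_sqrt_div_four_pow :
    Tendsto (fun n : ℕ => (n.centralBinom : ℝ) * √n / 4 ^ n) atTop (𝓝 (√π)⁻¹) := by
  have hs := Stirling.tendsto_stirlingSeq_sqrt_pi
  have hlim := (hs.comp (tendsto_id.const_mul_atTop' two_pos)).div (hs.pow 2)
    (pow_ne_zero 2 (sqrt_ne_zero'.mpr pi_pos))
  rw [sq, div_mul_eq_div_div, div_self (sqrt_ne_zero'.mpr pi_pos), one_div] at hlim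
  refine hlim.congr' ?_
  filter_upwards [eventually_ne_atTop 0] with n hn
  exact (centralBinom_mul_sqrt_div_four_pow_eq hn).symm

theorem tendsto_factorial_mul_centralBinom_sub_div :
    Tendsto (fun n : ℕ => (n ! : ℝ) * ((n + 2) * n.centralBinom / 2 ^ n - 3 * 2 ^ n / 2) /
      (√n / √π * 2 ^ n * n !)) atTop (𝓝 1) := by
  have hπ : √π ≠ 0 := sqrt_ne_zero'.mpr pi_pos
  have hinv : Tendsto (fun n : ℕ => (n : ℝ)⁻¹) atTop (𝓝 0) := tendsto_inv_atTop_nhds_zero_nat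
  have hinv_sqrt : Tendsto (fun n : ℕ => (√n)⁻¹) atTop (𝓝 0) :=
    tendsto_inv_atTop_zero.comp (tendsto_sqrt_atTop.comp tendsto_natCast_atTop_atTop)
  have hlim := ((((tendsto_const_nhds (x := (1 : ℝ))).add (hinv.const_mul 2)).mul
    tendsto_centralBinom_mul_sqrt_div_four_pow).sub (hinv_sqrt.const_mul (3 / 2))).const_mul √π
  rw [mul_zero, mul_zero, add_zero, one_mul, sub_zero, mul_inv_cancel₀ hπ] at hlim
  refine hlim.congr' ?_
  filter_upwards [eventually_ne_atTop 0] with n hn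
  have hn' : (0 : ℝ) < n := by positivity
  have hsqrt : √(n : ℝ) ^ 2 = n := sq_sqrt hn'.le
  rw [show (4 : ℝ) ^ n = 2 ^ n * 2 ^ n by rw [← mul_pow]; norm_num]
  field_simp
  rw [hsqrt]
  ring

theorem sqrt_div_sqrt_pi_mul_two_pow_mul_factorial {n : ℕ} (hn : n ≠ 0) :
    √n / √π * 2 ^ n * n ! =
      √2 * (n : ℝ) ^ (n + 1) * (2 / exp 1) ^ n * (Stirling.stirlingSeq n / √π) := by
  have hn' : (0 : ℝ) < n := by positivity
  rw [Stirling.stirlingSeq, sqrt_mul zero_le_two, div_pow, div_pow]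
  field_simp
  rw [sq_sqrt hn'.le]
  ring

/-- As `n → ∞`, `e_{n,1} = n!·[tⁿ]E1` satisfies `e_{n,1} ~ (n^(1/2)/√π)·2ⁿ·n!`
(equivalently `e_{n,1} ~ √2·n^(n+1)·(2/e)ⁿ`), in the sense that the ratio of the
two sides tends to 1.  Here `E1 = (1/2)·U³·(1-U)⁻³` and `U` is the unique series
with zero constant coefficient satisfying `U = t + U²/2`. -/
theorem stmt_4 (U E1 : PowerSeries ℚ) (h0 : constantCoeff U = 0)
    (hU : U = PowerSeries.X + (1 / 2 : ℚ) • U ^ 2)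
    (hE1 : E1 = (1 / 2 : ℚ) • (U ^ 3 * ((1 - U)⁻¹) ^ 3)) :
    Tendsto (fun n : ℕ =>
        ((n.factorial : ℝ) * ((coeff n E1 : ℚ) : ℝ)) /
          ((n : ℝ) ^ ((1 : ℝ) / 2) / Real.sqrt π * 2 ^ n * n.factorial))
      atTop (nhds 1) ∧
    Tendsto (fun n : ℕ =>
        ((n.factorial : ℝ) * ((coeff n E1 : ℚ) : ℝ)) /
          (Real.sqrt 2 * (n : ℝ) ^ (n + 1) * (2 / Real.exp 1) ^ n))
      atTop (nhds 1) := by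
  have hE1' : E1 = (1 / 2 : ℚ) • ((1 - U)⁻¹ - 1) ^ 3 := by rw [hE1, ← mul_pow, mul_inv_one_sub h0]
  have hcoeff : ∀ᶠ n : ℕ in atTop,
      ((coeff n E1 : ℚ) : ℝ) = (n + 2) * n.centralBinom / 2 ^ n - 3 * 2 ^ n / 2 := by
    filter_upwards [eventually_ne_atTop 0] with n hn
    rw [hE1', coeff_half_smul_sub_one_pow_three (sq_inv_one_sub_mul_one_sub_two_mul_X h0 hU)
      (constantCoeff_inv_one_sub h0) hn]
    push_cast
    ring
  have h1 : Tendsto (fun n : ℕ => (n ! : ℝ) * ((coeff n E1 : ℚ) : ℝ) /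
      ((n : ℝ) ^ ((1 : ℝ) / 2) / √π * 2 ^ n * n !)) atTop (𝓝 1) := by
    refine tendsto_factorial_mul_centralBinom_sub_div.congr' ?_
    filter_upwards [hcoeff] with n hn
    rw [hn, ← sqrt_eq_rpow]
  refine ⟨h1, ?_⟩
  have h2 := h1.mul (Stirling.tendsto_stirlingSeq_sqrt_pi.div_const √π)
  rw [div_self (sqrt_ne_zero'.mpr pi_pos), mul_one] at h2
  refine h2.congr' ?_
  filter_upwards [eventually_ne_atTop 0] with n hn
  rw [← sqrt_eq_rpow, sqrt_div_sqrt_pi_mul_two_pow_mul_factorial hn]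
  have hs : 0 < Stirling.stirlingSeq n :=
    (sqrt_pos.mpr pi_pos).trans_le (Stirling.sqrt_pi_le_stirlingSeq hn)
  field_simp
end

section
/- The unique solution X ∈ ℚ[[t]] of the functional equation X = U·X + (1/2)·E1² + (E1/2)·(U·(1 − U)⁻¹)² + U²·E1·(1 − U)⁻³ is X = (1/2)·E1²·(1 − U)⁻¹ + (1/2)·E1·U²·(1 − U)⁻³ + E1·U²·(1 − U)⁻⁴; this X is the exponential generating function E2 of leaf-labeled time-consistent galled trees with exactly two galls. -/
open PowerSeries

theorem eq_mul_add_iff_eq_mul_of_mul_eq_one {R : Type*} [CommRing R] {u v x c : R}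
    (huv : (1 - u) * v = 1) : x = u * x + c ↔ x = v * c := by
  constructor
  · intro h
    linear_combination v * h - x * huv
  · intro h
    linear_combination (1 - u) * h + c * huv

theorem stmt_5_general (U E1 : PowerSeries ℚ) (h0 : constantCoeff U = 0) :
    ∀ X : PowerSeries ℚ,
      X = U * X + (1 / 2 : ℚ) • E1 ^ 2
          + ((1 / 2 : ℚ) • E1) * (U * (1 - U)⁻¹) ^ 2
          + U ^ 2 * E1 * ((1 - U)⁻¹) ^ 3 ↔
      X = (1 / 2 : ℚ) • (E1 ^ 2 * (1 - U)⁻¹)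
          + (1 / 2 : ℚ) • (E1 * U ^ 2 * ((1 - U)⁻¹) ^ 3)
          + E1 * U ^ 2 * ((1 - U)⁻¹) ^ 4 := by
  intro X
  have hinv : (1 - U) * (1 - U)⁻¹ = 1 := PowerSeries.mul_inv_cancel _ (by simp [h0])
  rw [add_assoc, add_assoc, eq_mul_add_iff_eq_mul_of_mul_eq_one hinv]
  simp only [smul_eq_C_mul]
  ring_nf

/-- The unique solution `X ∈ ℚ[[t]]` of
`X = U·X + (1/2)·E1² + (E1/2)·(U·(1-U)⁻¹)² + U²·E1·(1-U)⁻³` is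
`X = (1/2)·E1²·(1-U)⁻¹ + (1/2)·E1·U²·(1-U)⁻³ + E1·U²·(1-U)⁻⁴`
(the EGF `E2` of leaf-labeled time-consistent galled trees with exactly two galls),
where `E1 = (1/2)·U³·(1-U)⁻³` and `U` is the unique series with zero constant
coefficient satisfying `U = t + U²/2`. -/
theorem stmt_5 (U E1 : PowerSeries ℚ) (h0 : constantCoeff U = 0)
    (hU : U = PowerSeries.X + (1 / 2 : ℚ) • U ^ 2)
    (hE1 : E1 = (1 / 2 : ℚ) • (U ^ 3 * ((1 - U)⁻¹) ^ 3)) :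
    ∀ X : PowerSeries ℚ,
      X = U * X + (1 / 2 : ℚ) • E1 ^ 2
          + ((1 / 2 : ℚ) • E1) * (U * (1 - U)⁻¹) ^ 2
          + U ^ 2 * E1 * ((1 - U)⁻¹) ^ 3 ↔
      X = (1 / 2 : ℚ) • (E1 ^ 2 * (1 - U)⁻¹)
          + (1 / 2 : ℚ) • (E1 * U ^ 2 * ((1 - U)⁻¹) ^ 3)
          + E1 * U ^ 2 * ((1 - U)⁻¹) ^ 4 :=
  stmt_5_general U E1 h0
end

section
/- As n → ∞, the number e_{n,2} := n!·[tⁿ]E2 of leaf-labeled time-consistent galled trees with n leaves and exactly two galls satisfies the asymptotic equivalence e_{n,2} ~ (n^{5/2}/(3√π))·2ⁿ·n! (equivalently, e_{n,2} ~ (√2/3)·n^{n+3}·(2/e)ⁿ), in the sense that the ratio of the two sides tends to 1. -/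
/-!
Since `U = X + U²/2`, the series `S = 1 - U` satisfies `S² = 1 - 2X`, so `S = (1 - 2X)^(1/2)` and
`T = S⁻¹ = (1 - 2X)^(-1/2)`. From `U T = T - 1` one gets `E1 = (T - 1)³/2` and `E2 = p(T)` for a
polynomial `p` of degree 7 with leading coefficient `5/8`. The `n`-th coefficient of `T^k` is
`2ⁿ · multichoose (k/2) n`, and Euler's limit formula for `Γ` gives
`multichoose a n ~ n^(a-1) / Γ(a)`, so only `T⁷` contributes to the leading order:
`[tⁿ] E2 ~ (5/8) · 2ⁿ · n^(5/2) / Γ(7/2) = 2ⁿ · n^(5/2) / (3√π)`.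
The second form of the asymptotics is Stirling's formula.
-/

open PowerSeries Filter Real Topology
open scoped Polynomial

theorem Ring.multichoose_eq_prod_div_factorial {K : Type*} [Field K] [CharZero K] (a : K)
    (n : ℕ) : Ring.multichoose a n = (∏ j ∈ Finset.range n, (a + j)) / n.factorial := by
  rw [eq_div_iff (by exact_mod_cast n.factorial_ne_zero), mul_comm, ← nsmul_eq_mul,
    Ring.factorial_nsmul_multichoose_eq_ascPochhammer, Polynomial.ascPochhammer_smeval_eq_eval]
  induction n with
  | zero => simp
  | succ n ih => simp [ascPochhammer_succ_right, ih, Finset.prod_range_succ]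

namespace Real

theorem multichoose_mul_GammaSeq {a : ℝ} (ha : 0 < a) (n : ℕ) :
    Ring.multichoose a n * GammaSeq a n = (n : ℝ) ^ a / (n + a) := by
  have hprod : ∏ j ∈ Finset.range n, (a + j) ≠ 0 :=
    Finset.prod_ne_zero_iff.2 fun j _ => by positivity
  have hfac : (n.factorial : ℝ) ≠ 0 := by exact_mod_cast n.factorial_ne_zero
  rw [Ring.multichoose_eq_prod_div_factorial, GammaSeq, Finset.prod_range_succ]
  field_simp
  ring

theorem tendsto_multichoose_div_rpow {a : ℝ} (ha : 0 < a) :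
    Tendsto (fun n : ℕ => Ring.multichoose a n / (n : ℝ) ^ (a - 1)) atTop
      (𝓝 (Gamma a)⁻¹) := by
  have h := (tendsto_natCast_div_add_atTop a).div (GammaSeq_tendsto_Gamma a)
    (Gamma_pos_of_pos ha).ne'
  rw [one_div] at h
  refine h.congr' ?_
  filter_upwards [eventually_gt_atTop 0] with n hn
  have hn' : (0 : ℝ) < n := by exact_mod_cast hn
  have hmul := multichoose_mul_GammaSeq ha n
  have hG : GammaSeq a n ≠ 0 := by
    rintro h0
    rw [h0, mul_zero] at hmul
    exact absurd hmul.symm (by positivity)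
  rw [Pi.div_apply, div_eq_div_iff hG (by positivity), mul_comm, hmul, rpow_sub_one hn'.ne']
  field_simp

theorem tendsto_multichoose_div_rpow_of_lt {a b : ℝ} (ha : 0 ≤ a) (hab : a < b) :
    Tendsto (fun n : ℕ => Ring.multichoose a n / (n : ℝ) ^ (b - 1)) atTop (𝓝 0) := by
  rcases ha.eq_or_lt with rfl | ha
  · refine tendsto_const_nhds.congr' ?_
    filter_upwards [eventually_gt_atTop 0] with n hn
    obtain ⟨k, rfl⟩ := Nat.exists_eq_add_one_of_ne_zero hn.ne'
    rw [Ring.multichoose_zero_succ, zero_div]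
  have hpow : Tendsto (fun n : ℕ => (n : ℝ) ^ (-(b - a))) atTop (𝓝 0) :=
    (tendsto_rpow_neg_atTop (by linarith)).comp tendsto_natCast_atTop_atTop
  have h := (tendsto_multichoose_div_rpow ha).mul hpow
  rw [mul_zero] at h
  refine h.congr' ?_
  filter_upwards [eventually_gt_atTop 0] with n hn
  have hn' : (0 : ℝ) < n := by exact_mod_cast hn
  rw [rpow_neg hn'.le, rpow_sub hn', rpow_sub hn', rpow_sub hn']
  field_simp

theorem Gamma_seven_halves : Gamma (7 / 2) = 15 * √π / 8 := by
  rw [show (7 / 2 : ℝ) = 1 / 2 + 1 + 1 + 1 by norm_num, Gamma_add_one (by norm_num),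
    Gamma_add_one (by norm_num), Gamma_add_one (by norm_num), Gamma_one_half_eq]
  ring

end Real

namespace PowerSeries

theorem binomialSeries_pow {R A : Type*} [CommRing R] [BinomialRing R] [Ring A] [Algebra R A]
    (r : R) (k : ℕ) : binomialSeries A r ^ k = binomialSeries A (k * r) := by
  induction k with
  | zero => simp
  | succ k ih => rw [pow_succ, ih, ← binomialSeries_add]; push_cast; ring_nf

theorem coeff_rescale_binomialSeries_neg {K : Type*} [Field K] [CharZero K] (c r : K) (n : ℕ) :
    coeff n (rescale (-c) (binomialSeries K (-r))) = c ^ n * Ring.multichoose r n := by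
  rw [coeff_rescale, binomialSeries_coeff, Ring.choose_neg', smul_eq_mul, mul_one,
    Units.smul_def, zsmul_eq_mul, Int.cast_negOnePow_natCast, ← mul_assoc, ← mul_pow,
    neg_mul_neg, mul_one]

theorem eq_of_sq_eq_sq {R : Type*} [CommRing R] [IsDomain R] [NeZero (2 : R)] {f g : R⟦X⟧}
    (h : f ^ 2 = g ^ 2) (hc : constantCoeff f = constantCoeff g) (hc0 : constantCoeff f ≠ 0) :
    f = g := by
  refine (sq_eq_sq_iff_eq_or_eq_neg.1 h).resolve_right fun hneg => hc0 ?_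
  have h2 : (2 : R) * constantCoeff f = 0 := by
    rw [two_mul]; nth_rw 2 [hc]; rw [hneg, map_neg, neg_add_cancel]
  exact (mul_eq_zero.1 h2).resolve_left two_ne_zero

theorem tendsto_coeff_aeval_rescale_binomialSeries (p : ℚ[X]) {c r : ℚ} (hc : c ≠ 0)
    (hr : 0 < r) {d : ℕ} (hd : 0 < d) (hp : p.natDegree ≤ d) :
    Tendsto (fun n : ℕ =>
        ((coeff n (Polynomial.aeval (rescale (-c) (binomialSeries ℚ (-r))) p) : ℚ) : ℝ) /
          ((c : ℝ) ^ n * (n : ℝ) ^ ((d * r : ℝ) - 1))) atTop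
      (𝓝 (p.coeff d / Gamma (d * r))) := by
  have hcoeff : ∀ n,
      ((coeff n (Polynomial.aeval (rescale (-c) (binomialSeries ℚ (-r))) p) : ℚ) : ℝ) =
        (c : ℝ) ^ n *
          ∑ i ∈ Finset.range (d + 1), (p.coeff i : ℝ) * Ring.multichoose (i * r : ℝ) n := by
    intro n
    rw [Polynomial.aeval_eq_sum_range' (Nat.lt_succ_of_le hp), map_sum, Rat.cast_sum,
      Finset.mul_sum]
    refine Finset.sum_congr rfl fun i _ => ?_
    rw [← map_pow, binomialSeries_pow, mul_neg, coeff_smul, coeff_rescale_binomialSeries_neg,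
      smul_eq_mul]
    have hcast := Ring.map_multichoose (Rat.castHom ℝ) (i * r) n
    simp only [Rat.coe_castHom, Rat.cast_mul, Rat.cast_natCast] at hcast
    rw [Rat.cast_mul, Rat.cast_mul, Rat.cast_pow, hcast]
    ring
  have hterm : ∀ i ∈ Finset.range (d + 1), Tendsto
      (fun n : ℕ =>
        (p.coeff i : ℝ) * (Ring.multichoose (i * r : ℝ) n / (n : ℝ) ^ ((d * r : ℝ) - 1)))
      atTop (𝓝 (if i = d then p.coeff d / Gamma (d * r) else 0)) := by
    intro i hi
    have hid : i ≤ d := Nat.lt_succ_iff.1 (Finset.mem_range.1 hi)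
    split_ifs with h
    · subst h
      exact (tendsto_multichoose_div_rpow (by positivity)).const_mul _
    · have hlt : (i * r : ℝ) < d * r :=
        mul_lt_mul_of_pos_right (by exact_mod_cast lt_of_le_of_ne hid h) (by exact_mod_cast hr)
      simpa using (tendsto_multichoose_div_rpow_of_lt (by positivity) hlt).const_mul
        (p.coeff i : ℝ)
  have h := tendsto_finsetSum _ hterm
  rw [Finset.sum_ite_eq' (Finset.range (d + 1)) d, if_pos (Finset.self_mem_range_succ d)] at h
  refine h.congr fun n => ?_
  have hcn : (c : ℝ) ^ n ≠ 0 := pow_ne_zero _ (by exact_mod_cast hc)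
  simp only [hcoeff, mul_div_mul_left _ _ hcn, Finset.sum_div, mul_div_assoc]

end PowerSeries

namespace Stirling

theorem rpow_five_halves_mul_eq_stirlingSeq_mul {n : ℕ} (hn : n ≠ 0) :
    (n : ℝ) ^ ((5 : ℝ) / 2) / (3 * √π) * 2 ^ n * n.factorial
      = stirlingSeq n / √π * (√2 / 3 * (n : ℝ) ^ (n + 3) * (2 / exp 1) ^ n) := by
  have hN : (0 : ℝ) < n := by exact_mod_cast Nat.pos_of_ne_zero hn
  have hx52 : (n : ℝ) ^ ((5 : ℝ) / 2) = (n : ℝ) ^ 2 * √n := by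
    rw [show (5 : ℝ) / 2 = (2 : ℕ) + 1 / 2 by norm_num, rpow_add hN, rpow_natCast,
      ← sqrt_eq_rpow]
  have hsN : √(n : ℝ) ≠ 0 := sqrt_ne_zero'.2 hN
  have hpi : √π ≠ 0 := sqrt_ne_zero'.2 pi_pos
  rw [stirlingSeq, hx52, sqrt_mul zero_le_two, div_pow, div_pow, pow_add]
  field_simp
  rw [sq_sqrt hN.le]

end Stirling

namespace GalledTrees

theorem one_sub_eq_rescale_binomialSeries {U : ℚ⟦X⟧} (h0 : constantCoeff U = 0)
    (hU : U = PowerSeries.X + (1 / 2 : ℚ) • U ^ 2) :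
    1 - U = rescale (-2) (binomialSeries ℚ (1 / 2 : ℚ)) := by
  have h2 : (2 : ℚ⟦X⟧) * algebraMap ℚ ℚ⟦X⟧ (1 / 2) = 1 := by
    rw [← map_ofNat (algebraMap ℚ ℚ⟦X⟧) 2, ← map_mul]; norm_num
  rw [Algebra.smul_def] at hU
  refine eq_of_sq_eq_sq ?_ ?_ (by simp [h0])
  · rw [← map_pow, binomialSeries_pow, show ((2 : ℕ) : ℚ) * (1 / 2) = (1 : ℕ) by norm_num,
      binomialSeries_nat, pow_one, map_add, map_one, rescale_X, map_neg, map_ofNat]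
    linear_combination (-2) * hU - U ^ 2 * h2
  · rw [← coeff_zero_eq_constantCoeff_apply, ← coeff_zero_eq_constantCoeff_apply, coeff_rescale]
    simp [h0]

theorem inv_one_sub_eq_rescale_binomialSeries {U : ℚ⟦X⟧} (h0 : constantCoeff U = 0)
    (hU : U = PowerSeries.X + (1 / 2 : ℚ) • U ^ 2) :
    (1 - U)⁻¹ = rescale (-2) (binomialSeries ℚ (-(1 / 2) : ℚ)) := by
  rw [PowerSeries.inv_eq_iff_mul_eq_one (by simp [h0]), one_sub_eq_rescale_binomialSeries h0 hU,
    ← map_mul, ← binomialSeries_add, neg_add_cancel, binomialSeries_zero, map_one]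

-- `8 p(T) = T (T - 1)⁶ + 2 T (T - 1)⁵ + 4 T² (T - 1)⁵`: substitute `E1 = (T - 1)³ / 2` and
-- `U T = T - 1` into `E2`.
noncomputable def twoGallPoly : ℚ[X] :=
  Polynomial.C (1 / 8) * (5 * Polynomial.X ^ 7 - 24 * Polynomial.X ^ 6 + 45 * Polynomial.X ^ 5
    - 40 * Polynomial.X ^ 4 + 15 * Polynomial.X ^ 3 - Polynomial.X)

theorem natDegree_twoGallPoly_le : twoGallPoly.natDegree ≤ 7 := by
  unfold twoGallPoly; compute_degree

theorem coeff_twoGallPoly_seven : twoGallPoly.coeff 7 = 5 / 8 := by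
  simp [twoGallPoly, Polynomial.coeff_X, Polynomial.coeff_X_pow]
  norm_num

theorem eq_aeval_twoGallPoly {A : Type*} [CommRing A] [Algebra ℚ A] {U T E1 E2 : A}
    (hT : (1 - U) * T = 1)
    (hE1 : E1 = (1 / 2 : ℚ) • (U ^ 3 * T ^ 3))
    (hE2 : E2 = (1 / 2 : ℚ) • (E1 ^ 2 * T) + (1 / 2 : ℚ) • (E1 * U ^ 2 * T ^ 3)
        + E1 * U ^ 2 * T ^ 4) :
    E2 = Polynomial.aeval T twoGallPoly := by
  set h := algebraMap ℚ A (1 / 2)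
  have h2 : 2 * h = 1 := by
    rw [← map_ofNat (algebraMap ℚ A) 2, ← map_mul]; norm_num
  have hUT : U * T = T - 1 := by linear_combination -hT
  rw [Algebra.smul_def] at hE1
  rw [Algebra.smul_def, Algebra.smul_def] at hE2
  have hE1' : E1 = h * (T - 1) ^ 3 := by rw [hE1, ← hUT]; ring
  have hE2' : E2 = h * (E1 ^ 2 * T) + h * (E1 * (T - 1) ^ 2 * T) + E1 * (T - 1) ^ 2 * T ^ 2 := by
    rw [hE2, ← hUT]; ring
  have h8 : algebraMap ℚ A (1 / 8) = h ^ 3 := by rw [← map_pow]; norm_num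
  simp only [twoGallPoly, map_mul, map_sub, map_add, Polynomial.aeval_C, h8, map_pow,
    Polynomial.aeval_X, map_ofNat]
  rw [hE2', hE1']
  -- the three summands carry `h³`, `h²` and `h`; `2 h = 1` brings them to `h³`
  linear_combination (-(h ^ 2 * (T - 1) ^ 5 * T + h * (1 + 2 * h) * (T - 1) ^ 5 * T ^ 2)) * h2

theorem tendsto_coeff_div {U E1 E2 : ℚ⟦X⟧} (h0 : constantCoeff U = 0)
    (hU : U = PowerSeries.X + (1 / 2 : ℚ) • U ^ 2)
    (hE1 : E1 = (1 / 2 : ℚ) • (U ^ 3 * ((1 - U)⁻¹) ^ 3))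
    (hE2 : E2 = (1 / 2 : ℚ) • (E1 ^ 2 * (1 - U)⁻¹)
        + (1 / 2 : ℚ) • (E1 * U ^ 2 * ((1 - U)⁻¹) ^ 3)
        + E1 * U ^ 2 * ((1 - U)⁻¹) ^ 4) :
    Tendsto (fun n : ℕ => ((coeff n E2 : ℚ) : ℝ) / (2 ^ n * (n : ℝ) ^ ((5 : ℝ) / 2))) atTop
      (𝓝 (1 / (3 * √π))) := by
  have hE2T := eq_aeval_twoGallPoly (PowerSeries.mul_inv_cancel _ (by simp [h0])) hE1 hE2
  have h := tendsto_coeff_aeval_rescale_binomialSeries twoGallPoly two_ne_zero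
    one_half_pos (by norm_num) natDegree_twoGallPoly_le
  rw [← inv_one_sub_eq_rescale_binomialSeries h0 hU, ← hE2T, coeff_twoGallPoly_seven] at h
  have hexp : ((7 : ℕ) : ℝ) * ((1 / 2 : ℚ) : ℝ) - 1 = 5 / 2 := by norm_num
  have hlim : ((5 / 8 : ℚ) : ℝ) / Gamma ((7 : ℕ) * ((1 / 2 : ℚ) : ℝ)) = 1 / (3 * √π) := by
    rw [show ((7 : ℕ) : ℝ) * ((1 / 2 : ℚ) : ℝ) = 7 / 2 by norm_num, Gamma_seven_halves]
    field_simp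
    norm_num
  rwa [hexp, hlim, Rat.cast_ofNat] at h

end GalledTrees

/-- As `n → ∞`, `e_{n,2} = n!·[tⁿ]E2` satisfies `e_{n,2} ~ (n^(5/2)/(3√π))·2ⁿ·n!`
(equivalently `e_{n,2} ~ (√2/3)·n^(n+3)·(2/e)ⁿ`), in the sense that the ratio of
the two sides tends to 1.  Here `U` is the unique series with zero constant
coefficient satisfying `U = t + U²/2`, `E1 = (1/2)·U³·(1-U)⁻³`, and
`E2 = (1/2)·E1²·(1-U)⁻¹ + (1/2)·E1·U²·(1-U)⁻³ + E1·U²·(1-U)⁻⁴`. -/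
theorem stmt_6 (U E1 E2 : PowerSeries ℚ) (h0 : constantCoeff U = 0)
    (hU : U = PowerSeries.X + (1 / 2 : ℚ) • U ^ 2)
    (hE1 : E1 = (1 / 2 : ℚ) • (U ^ 3 * ((1 - U)⁻¹) ^ 3))
    (hE2 : E2 = (1 / 2 : ℚ) • (E1 ^ 2 * (1 - U)⁻¹)
        + (1 / 2 : ℚ) • (E1 * U ^ 2 * ((1 - U)⁻¹) ^ 3)
        + E1 * U ^ 2 * ((1 - U)⁻¹) ^ 4) :
    Tendsto (fun n : ℕ =>
        ((n.factorial : ℝ) * ((coeff n E2 : ℚ) : ℝ)) /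
          ((n : ℝ) ^ ((5 : ℝ) / 2) / (3 * Real.sqrt π) * 2 ^ n * n.factorial))
      atTop (nhds 1) ∧
    Tendsto (fun n : ℕ =>
        ((n.factorial : ℝ) * ((coeff n E2 : ℚ) : ℝ)) /
          (Real.sqrt 2 / 3 * (n : ℝ) ^ (n + 3) * (2 / Real.exp 1) ^ n))
      atTop (nhds 1) := by
  have hpi : √π ≠ 0 := sqrt_ne_zero'.2 pi_pos
  have hscaled := (GalledTrees.tendsto_coeff_div h0 hU hE1 hE2).const_mul (3 * √π)
  rw [mul_one_div_cancel (by positivity)] at hscaled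
  have hstirling : Tendsto (fun n : ℕ => Stirling.stirlingSeq n / √π) atTop (𝓝 1) := by
    simpa [div_self hpi] using Stirling.tendsto_stirlingSeq_sqrt_pi.div_const √π
  have hfirst : Tendsto (fun n : ℕ => ((n.factorial : ℝ) * ((coeff n E2 : ℚ) : ℝ)) /
      ((n : ℝ) ^ ((5 : ℝ) / 2) / (3 * √π) * 2 ^ n * n.factorial)) atTop (𝓝 1) :=
    hscaled.congr fun n => by field_simp
  refine ⟨hfirst, ?_⟩
  have hsecond := hfirst.mul hstirling
  rw [mul_one] at hsecond
  refine hsecond.congr' ?_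
  filter_upwards [eventually_ne_atTop 0] with n hn
  obtain ⟨k, rfl⟩ := Nat.exists_eq_add_one_of_ne_zero hn
  have hs : Stirling.stirlingSeq (k + 1) / √π ≠ 0 :=
    div_ne_zero (Stirling.stirlingSeq'_pos k).ne' hpi
  rw [Stirling.rpow_five_halves_mul_eq_stirlingSeq_mul hn, ← div_div, div_right_comm,
    div_mul_cancel₀ _ hs]
end

section
/- There exists a unique formal power series A in ℚ[[t]] with constant coefficient 0 satisfying A = t + A²/2 + (A/2)·(A·(1 − A)⁻¹)²; equivalently, A is the unique series with constant coefficient 0 satisfying the polynomial identity 2·A·(1 − A)² = 2·t·(1 − A)² + A²·(1 − A)² + A³. -/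
/-!
Clearing the unit denominator `2·(1 - A)²` turns the functional equation into `Q(A) = 0` for a
monic quartic `Q` over `ℚ⟦t⟧` with `Q(0) ≡ 0` and `Q'(0) ≡ -2` modulo `t`. As `ℚ⟦t⟧` is
`t`-adically complete, hence Henselian, `Q` has a root with constant term `0`; it is unique because
`Q(B) - Q(A) = (B - A)·(Q'(A) + k·(B - A))` and the second factor has constant term `-2`.
-/

open PowerSeries

namespace PowerSeries

variable {R : Type*} [CommRing R]

theorem mem_span_X_pow_smul_top_iff (n : ℕ) (f : R⟦X⟧) :
    f ∈ (Ideal.span {(X : R⟦X⟧)} ^ n • ⊤ : Ideal R⟦X⟧) ↔ ∀ i < n, coeff i f = 0 := by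
  rw [← Ideal.one_eq_top, Ideal.smul_eq_mul, mul_one, Ideal.span_singleton_pow,
    Ideal.mem_span_singleton, X_pow_dvd_iff]

instance isAdicComplete_span_X : IsAdicComplete (Ideal.span {(X : R⟦X⟧)}) R⟦X⟧ where
  haus' f hf := by
    ext i
    simpa using (mem_span_X_pow_smul_top_iff (i + 1) f).mp (SModEq.zero.mp (hf (i + 1))) i
      i.lt_succ_self
  prec' f hf := by
    refine ⟨mk fun i ↦ coeff i (f (i + 1)), fun n ↦ ?_⟩
    rw [SModEq.sub_mem, mem_span_X_pow_smul_top_iff]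
    intro i hi
    have hfi :=
      (mem_span_X_pow_smul_top_iff (i + 1) _).mp (SModEq.sub_mem.mp (hf hi)) i i.lt_succ_self
    rw [map_sub, sub_eq_zero] at hfi ⊢
    rw [coeff_mk, hfi]

theorem exists_isRoot_of_isUnit_derivative {f : Polynomial R⟦X⟧} (hf : f.Monic)
    (h₀ : constantCoeff (f.eval 0) = 0)
    (h₁ : IsUnit (constantCoeff (f.derivative.eval 0))) :
    ∃ a : R⟦X⟧, f.IsRoot a ∧ constantCoeff a = 0 := by
  obtain ⟨a, hroot, ha⟩ := HenselianRing.is_henselian f hf 0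
    (Ideal.mem_span_singleton.mpr (X_dvd_iff.mpr h₀))
    ((isUnit_iff_constantCoeff.mpr h₁).map (Ideal.Quotient.mk (Ideal.span {X})))
  rw [sub_zero, Ideal.mem_span_singleton, X_dvd_iff] at ha
  exact ⟨a, hroot, ha⟩

theorem constantCoeff_eval_of_constantCoeff_eq_zero (g : Polynomial R⟦X⟧) {a : R⟦X⟧}
    (ha : constantCoeff a = 0) : constantCoeff (g.eval a) = constantCoeff (g.eval 0) := by
  have hX : X ∣ g.eval a - g.eval 0 :=
    (X_dvd_iff.mpr (by simpa using ha)).trans (Polynomial.sub_dvd_eval_sub a 0 g)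
  rwa [X_dvd_iff, map_sub, sub_eq_zero] at hX

theorem eq_of_isRoot_of_constantCoeff_derivative_ne_zero [IsDomain R] {f : Polynomial R⟦X⟧}
    (h₁ : constantCoeff (f.derivative.eval 0) ≠ 0) {a b : R⟦X⟧}
    (ha : f.IsRoot a) (hb : f.IsRoot b) (ha₀ : constantCoeff a = 0) (hb₀ : constantCoeff b = 0) :
    a = b := by
  obtain ⟨k, hk⟩ := f.binomExpansion a (b - a)
  rw [add_sub_cancel, hb.eq_zero, ha.eq_zero] at hk
  have hfactor : (b - a) * (f.derivative.eval a + k * (b - a)) = 0 := by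
    linear_combination -hk
  refine (sub_eq_zero.mp ((mul_eq_zero.mp hfactor).resolve_right fun h ↦ h₁ ?_)).symm
  simpa [ha₀, hb₀, constantCoeff_eval_of_constantCoeff_eq_zero _ ha₀] using
    congrArg constantCoeff h

theorem existsUnique_isRoot [IsDomain R] {f : Polynomial R⟦X⟧} (hf : f.Monic)
    (h₀ : constantCoeff (f.eval 0) = 0)
    (h₁ : IsUnit (constantCoeff (f.derivative.eval 0))) :
    ∃! a : R⟦X⟧, constantCoeff a = 0 ∧ f.IsRoot a := by
  obtain ⟨a, ha, ha₀⟩ := exists_isRoot_of_isUnit_derivative hf h₀ h₁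
  exact ⟨a, ⟨ha₀, ha⟩, fun b ⟨hb₀, hb⟩ ↦
    eq_of_isRoot_of_constantCoeff_derivative_ne_zero h₁.ne_zero hb ha hb₀ ha₀⟩

end PowerSeries

namespace GalledTree

/-- `2·A·(1 - A)² = 2·t·(1 - A)² + A²·(1 - A)² + A³`, rearranged as a monic quartic in `A`. -/
noncomputable def quartic : Polynomial ℚ⟦X⟧ :=
  Polynomial.X ^ 4 - 3 * Polynomial.X ^ 3 + Polynomial.C (5 + 2 * X) * Polynomial.X ^ 2
    - Polynomial.C (2 + 4 * X) * Polynomial.X + Polynomial.C (2 * X)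

theorem quartic_monic : quartic.Monic := by
  unfold quartic
  monicity!

theorem quartic_isRoot_iff (A : ℚ⟦X⟧) :
    quartic.IsRoot A ↔
      2 * A * (1 - A) ^ 2 = 2 * X * (1 - A) ^ 2 + A ^ 2 * (1 - A) ^ 2 + A ^ 3 := by
  simp only [quartic, Polynomial.IsRoot, Polynomial.eval_add, Polynomial.eval_sub,
    Polynomial.eval_mul, Polynomial.eval_pow, Polynomial.eval_C, Polynomial.eval_X,
    Polynomial.eval_ofNat]
  constructor <;> intro h <;> linear_combination -h

theorem constantCoeff_quartic_eval_zero : constantCoeff (quartic.eval 0) = 0 := by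
  simp [quartic]

theorem constantCoeff_quartic_derivative_eval_zero :
    constantCoeff (quartic.derivative.eval 0) = -2 := by
  simp [quartic, map_ofNat]

theorem functionalEquation_iff {A : ℚ⟦X⟧} (hA : constantCoeff A = 0) :
    A = X + (1 / 2 : ℚ) • A ^ 2 + ((1 / 2 : ℚ) • A) * (A * (1 - A)⁻¹) ^ 2 ↔
      2 * A * (1 - A) ^ 2 = 2 * X * (1 - A) ^ 2 + A ^ 2 * (1 - A) ^ 2 + A ^ 3 := by
  have hinv : (1 - A) * (1 - A)⁻¹ = 1 := PowerSeries.mul_inv_cancel _ (by simp [hA])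
  have hunit : IsUnit (2 * (1 - A) ^ 2 : ℚ⟦X⟧) := by
    rw [isUnit_iff_constantCoeff]
    simp [hA, map_ofNat]
  have hhalf : (2 : ℚ⟦X⟧) * C (1 / 2 : ℚ) = 1 := by
    rw [← map_ofNat C 2, ← map_mul]
    norm_num
  have hclear :
      2 * (1 - A) ^ 2 * (X + (1 / 2 : ℚ) • A ^ 2 + ((1 / 2 : ℚ) • A) * (A * (1 - A)⁻¹) ^ 2)
        = 2 * X * (1 - A) ^ 2 + A ^ 2 * (1 - A) ^ 2 + A ^ 3 := by
    rw [smul_eq_C_mul, smul_eq_C_mul]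
    linear_combination (A ^ 3 * (1 + (1 - A) * (1 - A)⁻¹)) * hinv
      + (A ^ 2 * (1 - A) ^ 2 + A ^ 3 * ((1 - A) * (1 - A)⁻¹) ^ 2) * hhalf
  rw [← hunit.mul_right_inj, hclear, show 2 * (1 - A) ^ 2 * A = 2 * A * (1 - A) ^ 2 by ring]

end GalledTree

open GalledTree in
/-- There exists a unique formal power series `A ∈ ℚ[[t]]` with constant coefficient `0`
satisfying `A = t + A²/2 + (A/2)·(A·(1-A)⁻¹)²`; moreover, for series `A` with constant
coefficient `0`, this functional equation is equivalent to the polynomial identity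
`2·A·(1-A)² = 2·t·(1-A)² + A²·(1-A)² + A³`. -/
theorem stmt_7 :
    (∃! A : PowerSeries ℚ, constantCoeff (R := ℚ) A = 0 ∧
      A = PowerSeries.X + (1 / 2 : ℚ) • A ^ 2
          + ((1 / 2 : ℚ) • A) * (A * (1 - A)⁻¹) ^ 2) ∧
    (∀ A : PowerSeries ℚ, constantCoeff (R := ℚ) A = 0 →
      (A = PowerSeries.X + (1 / 2 : ℚ) • A ^ 2
          + ((1 / 2 : ℚ) • A) * (A * (1 - A)⁻¹) ^ 2 ↔
        2 * A * (1 - A) ^ 2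
          = 2 * PowerSeries.X * (1 - A) ^ 2 + A ^ 2 * (1 - A) ^ 2 + A ^ 3)) := by
  have hroot : ∃! A : ℚ⟦X⟧, constantCoeff A = 0 ∧ quartic.IsRoot A :=
    existsUnique_isRoot quartic_monic constantCoeff_quartic_eval_zero
      (by rw [constantCoeff_quartic_derivative_eval_zero]; norm_num)
  refine ⟨(existsUnique_congr fun A ↦ and_congr_right fun hA ↦ ?_).mp hroot,
    fun A hA ↦ functionalEquation_iff hA⟩
  rw [functionalEquation_iff hA, quartic_isRoot_iff]
end

section
/- For every n ≥ 0, the coefficient of tⁿu¹ in G equals the coefficient of tⁿ in E1 := (1/2)·U³·(1 − U)⁻³; that is, extracting the coefficient of u¹ from the bivariate generating function G of leaf-labeled time-consistent galled trees yields the exponential generating function of those with exactly one gall. -/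
/-!
Write `G = a + b u + O(u²)` with `a, b ∈ ℚ[[t]]`. The `u⁰`-part of the functional equation says
`a = t + a²/2`, so `a = U`. Since the gall term carries a factor `u`, the `u¹`-part only sees
`W = G/(1 - G)` through `W(u = 0) = U/(1 - U)`, and reads `b = U b + (U/2) (U/(1 - U))²`;
solving gives `b = U³/(2 (1 - U)³)`.
-/

namespace PowerSeries

theorem eq_of_eq_X_add_smul_sq {R : Type*} [CommRing R] (c : R) {f g : PowerSeries R}
    (hf0 : constantCoeff f = 0) (hg0 : constantCoeff g = 0)
    (hf : f = X + c • f ^ 2) (hg : g = X + c • g ^ 2) : f = g := by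
  rw [smul_eq_C_mul] at hf hg
  have hunit : IsUnit (1 - C c * (f + g)) := by
    simp [isUnit_iff_constantCoeff, hf0, hg0]
  have hfactor : (f - g) * (1 - C c * (f + g)) = 0 := by linear_combination hf - hg
  exact sub_eq_zero.mp (hunit.mul_left_eq_zero.mp hfactor)

theorem coeff_one_eq_of_gall_equation {K : Type*} [Field K] [NeZero (2 : K)]
    {P W : PowerSeries (PowerSeries K)} (hP0 : constantCoeff (constantCoeff P) = 0)
    (hP : P = C X + (1 / 2 : K) • P ^ 2 + ((1 / 2 : K) • (X * P)) * W ^ 2)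
    (hW : (1 - P) * W = P) :
    coeff 1 P = (1 / 2 : K) • (constantCoeff P ^ 3 * ((1 - constantCoeff P)⁻¹) ^ 3) := by
  set a := constantCoeff P
  set b := coeff 1 P
  set w := constantCoeff W
  set v := (1 - a)⁻¹
  have hv : (1 - a) * v = 1 := PowerSeries.mul_inv_cancel _ (by simp [a, hP0])
  have hwv : w = a * v := by
    have hw : (1 - a) * w = a := by simpa using congrArg constantCoeff hW
    linear_combination v * hw - w * hv
  have half : C (2⁻¹ : K) * 2 = 1 := by
    rw [← map_ofNat C 2, ← map_mul, inv_mul_cancel₀ two_ne_zero, map_one]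
  have hb : (1 - a) * b = C (2⁻¹ : K) * a * w ^ 2 := by
    have h := congrArg (coeff 1) hP
    simp only [coeff_one_mul, coeff_one_pow, coeff_succ_X_mul, coeff_succ_C,
      coeff_zero_eq_constantCoeff, constantCoeff_X, map_add, map_mul, map_pow,
      LinearMap.map_smul_of_tower, Algebra.smul_mul_assoc, smul_eq_C_mul, one_div,
      Nat.cast_ofNat, Nat.add_one_sub_one, pow_one, zero_add, zero_mul, mul_zero, add_zero] at h
    linear_combination h + b * a * half
  rw [smul_eq_C_mul, one_div]
  linear_combination v * hb - b * hv + v * C (2⁻¹ : K) * a * (w + a * v) * hwv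

end PowerSeries

def finTwoEquivOptionUnit : Fin 2 ≃ Option Unit where
  toFun i := if i = 1 then none else some ()
  invFun o := o.elim 1 fun _ => 0
  left_inv := by decide
  right_inv := by decide

namespace MvPowerSeries

variable (R : Type*) [CommRing R]

/-- Power series in `X 0, X 1` as power series in `X 1` whose coefficients are power series
in `X 0`. -/
noncomputable def finTwoEquivPowerSeries :
    MvPowerSeries (Fin 2) R ≃ₐ[R] PowerSeries (PowerSeries R) :=
  (renameEquiv R finTwoEquivOptionUnit).trans (optionEquivLeft Unit R)

variable {R}

theorem coeff_coeff_finTwoEquivPowerSeries (F : MvPowerSeries (Fin 2) R) (n m : ℕ) :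
    PowerSeries.coeff n (PowerSeries.coeff m (finTwoEquivPowerSeries R F)) =
      coeff (Finsupp.single 0 n + Finsupp.single 1 m) F := by
  have hexp : (Finsupp.single () n).optionElim m =
      (Finsupp.single (0 : Fin 2) n + Finsupp.single 1 m).embDomain
        finTwoEquivOptionUnit.toEmbedding := by
    ext (_ | _) <;> simp [finTwoEquivOptionUnit]
  rw [PowerSeries.coeff, finTwoEquivPowerSeries, AlgEquiv.trans_apply,
    coeff_coeff_optionEquivLeft, hexp]
  exact coeff_embDomain_rename _ F _

theorem finTwoEquivPowerSeries_X_zero :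
    finTwoEquivPowerSeries R (X 0) = PowerSeries.C PowerSeries.X := by
  simp [finTwoEquivPowerSeries, finTwoEquivOptionUnit, PowerSeries.X]

theorem finTwoEquivPowerSeries_X_one : finTwoEquivPowerSeries R (X 1) = PowerSeries.X := by
  simp [finTwoEquivPowerSeries, finTwoEquivOptionUnit]

end MvPowerSeries

/-- For every `n ≥ 0`, the coefficient of `tⁿu¹` in the bivariate generating function
`G` of leaf-labeled time-consistent galled trees equals the coefficient of `tⁿ` in
`E1 := (1/2)·U³·(1-U)⁻³`, the EGF of those with exactly one gall.  Here `U` is the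
unique series in `ℚ[[t]]` with zero constant coefficient satisfying `U = t + U²/2`,
and `G` is the unique series in `ℚ[[t,u]]` with zero constant coefficient satisfying
`G = t + G²/2 + (u·G/2)·(G·(1-G)⁻¹)²`. -/
theorem stmt_10 (U E1 : PowerSeries ℚ) (hU0 : PowerSeries.constantCoeff U = 0)
    (hU : U = PowerSeries.X + (1 / 2 : ℚ) • U ^ 2)
    (hE1 : E1 = (1 / 2 : ℚ) • (U ^ 3 * ((1 - U)⁻¹) ^ 3))
    (G : MvPowerSeries (Fin 2) ℚ) (hG0 : MvPowerSeries.constantCoeff G = 0)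
    (hG : G = MvPowerSeries.X 0 + (1 / 2 : ℚ) • G ^ 2
        + ((1 / 2 : ℚ) • (MvPowerSeries.X 1 * G)) * (G * (1 - G)⁻¹) ^ 2) :
    ∀ n : ℕ,
      MvPowerSeries.coeff (Finsupp.single (0 : Fin 2) n + Finsupp.single 1 1) G
        = PowerSeries.coeff n E1 := by
  intro n
  have hW : (1 - G) * (G * (1 - G)⁻¹) = G := by
    rw [mul_left_comm, MvPowerSeries.mul_inv_cancel _ (by simp [hG0]), mul_one]
  generalize G * (1 - G)⁻¹ = W at hG hW
  have hP := congrArg (MvPowerSeries.finTwoEquivPowerSeries ℚ) hG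
  have hPW := congrArg (MvPowerSeries.finTwoEquivPowerSeries ℚ) hW
  simp only [map_add, map_smul, map_mul, map_pow, map_sub, map_one,
    MvPowerSeries.finTwoEquivPowerSeries_X_zero,
    MvPowerSeries.finTwoEquivPowerSeries_X_one] at hP hPW
  have hP0 : PowerSeries.constantCoeff
      (PowerSeries.constantCoeff (MvPowerSeries.finTwoEquivPowerSeries ℚ G)) = 0 := by
    rw [← PowerSeries.coeff_zero_eq_constantCoeff_apply,
      ← PowerSeries.coeff_zero_eq_constantCoeff_apply,
      MvPowerSeries.coeff_coeff_finTwoEquivPowerSeries]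
    simpa using hG0
  have hUP : PowerSeries.constantCoeff (MvPowerSeries.finTwoEquivPowerSeries ℚ G) = U :=
    PowerSeries.eq_of_eq_X_add_smul_sq _ hP0 hU0
      (by simpa using congrArg PowerSeries.constantCoeff hP) hU
  rw [← MvPowerSeries.coeff_coeff_finTwoEquivPowerSeries,
    PowerSeries.coeff_one_eq_of_gall_equation hP0 hP hPW, hUP, hE1]
end

section
/- For every n ≥ 0, the coefficient of tⁿu² in G equals the coefficient of tⁿ in E2 := (1/2)·E1²·(1 − U)⁻¹ + (1/2)·E1·U²·(1 − U)⁻³ + E1·U²·(1 − U)⁻⁴; that is, extracting the coefficient of u² from the bivariate generating function G of leaf-labeled time-consistent galled trees yields the exponential generating function of those with exactly two galls. -/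
/-!
Read `G` as a power series in `u` over `ℚ⟦t⟧`, `G = g₀ + g₁ u + g₂ u² + ⋯`, and clear
the denominator: with `P(y) = (1 - y)² (2y - 2t - y²)` the equation becomes `P(G) = u G³`.
Comparing coefficients of `u⁰`, `u¹`, `u²` gives `P(g₀) = 0`, hence `g₀ = U`; then
`2 (1 - U)³ g₁ = U³`, hence `g₁ = E1`; and `2 (1 - U)³ g₂ = 3 U² E1 + 5 (1 - U)² E1²`,
which rearranges to `g₂ = E2` using `2 E1 (1 - U)³ = U³`.
-/

open PowerSeries

namespace MvPowerSeries

variable (R : Type*) [CommSemiring R]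

/-- `R⟦t, u⟧ → R⟦t⟧⟦u⟧` for `t = X 0`, `u = X 1`: the variable `X 1` becomes the outer one. -/
noncomputable def finTwoToIterated : MvPowerSeries (Fin 2) R →ₐ[R] R⟦X⟧⟦X⟧ :=
  ((PowerSeries.mapAlgHom (renameEquiv R finOneEquiv).toAlgHom).comp
    (finSuccEquiv R 1).toAlgHom).comp (renameEquiv R (Equiv.swap 0 1)).toAlgHom

variable {R}

theorem finTwoToIterated_apply (F : MvPowerSeries (Fin 2) R) :
    finTwoToIterated R F = PowerSeries.map (rename finOneEquiv).toRingHom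
      (finSuccEquiv R 1 (rename (Equiv.swap 0 1) F)) :=
  rfl

theorem coeff_coeff_finTwoToIterated (F : MvPowerSeries (Fin 2) R) (n k : ℕ) :
    PowerSeries.coeff n (PowerSeries.coeff k (finTwoToIterated R F))
      = coeff (Finsupp.single 0 n + Finsupp.single 1 k) F := by
  have h_unit : Finsupp.embDomain finOneEquiv.toEmbedding (Finsupp.single 0 n)
      = Finsupp.single () n := by
    simp only [Finsupp.embDomain_single, Equiv.coe_toEmbedding]
  have h_swap : Finsupp.embDomain (Equiv.swap 0 1).toEmbedding
      (Finsupp.single 0 n + Finsupp.single 1 k)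
        = Finsupp.cons k (Finsupp.single (0 : Fin 1) n) := by
    ext i
    fin_cases i
    · simp
    · simp only [Fin.isValue, Finsupp.embDomain_add, Finsupp.embDomain_single,
        Function.Embedding.coeFn_mk, Equiv.swap_apply_left, Equiv.swap_apply_right, Fin.mk_one,
        Finsupp.coe_add, Pi.add_apply, Finsupp.single_eq_same, ne_eq, one_ne_zero,
        not_false_eq_true, Finsupp.single_eq_of_ne, add_zero]
      rw [← Fin.succ_zero_eq_one, Finsupp.cons_succ, Finsupp.single_eq_same]
  rw [finTwoToIterated_apply, PowerSeries.coeff_map, coeff_def (s := Finsupp.single () n) (by simp),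
    ← h_unit, AlgHom.toRingHom_eq_coe, RingHom.coe_coe, ← Equiv.coe_toEmbedding,
    coeff_embDomain_rename, coeff_coeff_finSuccEquiv, ← h_swap]
  exact coeff_embDomain_rename _ F _

theorem constantCoeff_constantCoeff_finTwoToIterated (F : MvPowerSeries (Fin 2) R) :
    PowerSeries.constantCoeff (PowerSeries.constantCoeff (finTwoToIterated R F))
      = constantCoeff F := by
  have h := coeff_coeff_finTwoToIterated F 0 0
  rwa [PowerSeries.coeff_zero_eq_constantCoeff_apply, PowerSeries.coeff_zero_eq_constantCoeff_apply,
    Finsupp.single_zero, Finsupp.single_zero, add_zero, coeff_zero_eq_constantCoeff_apply] at h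

theorem finTwoToIterated_X_zero : finTwoToIterated R (X 0) = PowerSeries.C PowerSeries.X := by
  rw [finTwoToIterated_apply, rename_X, Equiv.swap_apply_left, ← Fin.succ_zero_eq_one,
    finSuccEquiv_X_succ, PowerSeries.map_C, AlgHom.toRingHom_eq_coe, RingHom.coe_coe, rename_X]
  rfl

theorem finTwoToIterated_X_one : finTwoToIterated R (X 1) = PowerSeries.X := by
  rw [finTwoToIterated_apply, rename_X, Equiv.swap_apply_right, finSuccEquiv_X_zero,
    PowerSeries.map_X]

end MvPowerSeries

section Halves

variable {k A : Type*} [Field k] [NeZero (2 : k)] [Ring A] [Algebra k A]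

theorem two_mul_half_smul (y : A) : 2 * ((1 / 2 : k) • y) = y := by
  rw [two_mul, ← add_smul, add_halves, one_smul]

theorem half_smul_two_mul (y : A) : (1 / 2 : k) • (2 * y) = y := by
  rw [two_mul, smul_add, ← add_smul, add_halves, one_smul]

end Halves

/-- The equation of `G` with `x = t`, `y = u`, multiplied by `2 (1 - G)²`. -/
def GalledTreeEquation {R : Type*} [CommRing R] (x y g : R) : Prop :=
  2 * (1 - g) ^ 2 * g = 2 * (1 - g) ^ 2 * x + (1 - g) ^ 2 * g ^ 2 + y * g ^ 3

theorem galledTreeEquation_of_eq {σ k : Type*} [Field k] [NeZero (2 : k)]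
    {x y G : MvPowerSeries σ k} (hG0 : MvPowerSeries.constantCoeff G = 0)
    (hG : G = x + (1 / 2 : k) • G ^ 2 + ((1 / 2 : k) • (y * G)) * (G * (1 - G)⁻¹) ^ 2) :
    GalledTreeEquation x y G := by
  have hw : (1 - G) * (1 - G)⁻¹ = 1 := MvPowerSeries.mul_inv_cancel _ (by simp [hG0])
  unfold GalledTreeEquation
  linear_combination (2 * (1 - G) ^ 2) * hG + (1 - G) ^ 2 * two_mul_half_smul (k := k) (G ^ 2)
    + G ^ 2 * ((1 - G) * (1 - G)⁻¹) ^ 2 * two_mul_half_smul (k := k) (y * G)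
    + y * G ^ 3 * ((1 - G) * (1 - G)⁻¹ + 1) * hw

theorem GalledTreeEquation.map {R S : Type*} [CommRing R] [CommRing S] (f : R →+* S) {x y g : R}
    (h : GalledTreeEquation x y g) : GalledTreeEquation (f x) (f y) (f g) := by
  unfold GalledTreeEquation at *
  simpa [map_ofNat] using congrArg f h

namespace PowerSeries

theorem coeff_two_mul {A : Type*} [CommSemiring A] (φ ψ : A⟦X⟧) :
    coeff 2 (φ * ψ) = constantCoeff φ * coeff 2 ψ + coeff 1 φ * coeff 1 ψ
      + coeff 2 φ * constantCoeff ψ := by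
  simp only [coeff_mul, Finset.Nat.sum_antidiagonal_succ, coeff_zero_eq_constantCoeff,
    Finset.HasAntidiagonal.antidiagonal_zero, Finset.sum_singleton]
  ring

theorem eq_of_two_mul_eq_add_sq {k : Type*} [Field k] [NeZero (2 : k)] {x a b : k⟦X⟧}
    (ha0 : constantCoeff a = 0) (hb0 : constantCoeff b = 0)
    (ha : 2 * a = 2 * x + a ^ 2) (hb : 2 * b = 2 * x + b ^ 2) : a = b := by
  have h_unit : IsUnit (2 - a - b) := by
    rw [isUnit_iff_constantCoeff, map_sub, map_sub, map_ofNat, ha0, hb0, sub_zero, sub_zero]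
    exact two_ne_zero.isUnit
  rw [← sub_eq_zero, ← h_unit.mul_right_eq_zero]
  linear_combination ha - hb

end PowerSeries

namespace GalledTreeEquation

open PowerSeries

variable {k A : Type*} [Field k] [NeZero (2 : k)] [CommRing A] [Algebra k A]
  {g : A⟦X⟧} {x w : A} (h : GalledTreeEquation (C x) X g)
include h

theorem constantCoeff_eq (h_unit : IsUnit (1 - constantCoeff g)) :
    2 * constantCoeff g = 2 * x + constantCoeff g ^ 2 := by
  have h0 := congrArg constantCoeff h
  simp only [two_mul, map_mul, map_add, map_pow, map_sub, constantCoeff_one, constantCoeff_C,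
    constantCoeff_X, zero_mul, add_zero] at h0
  rw [← sub_eq_zero, ← (h_unit.pow 2).mul_right_eq_zero]
  linear_combination h0

/- With `P(y) = (1 - y)² (2y - 2x - y²)` and `a = constantCoeff g` a root of `P`, the coefficients
of `u` and `u²` in `P(g) = u g³` involve `P'(a) = 2 (1 - a)³` and `P''(a) / 2 = -5 (1 - a)²`. -/
variable (ha : 2 * constantCoeff g = 2 * x + constantCoeff g ^ 2)
include ha

theorem two_mul_one_sub_pow_three_mul_coeff_one :
    2 * (1 - constantCoeff g) ^ 3 * coeff 1 g = constantCoeff g ^ 3 := by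
  have h1 := congrArg (coeff 1) h
  simp only [pow_succ, pow_zero, one_mul, two_mul, coeff_one_mul, map_add, map_sub, coeff_one,
    one_ne_zero, ↓reduceIte, zero_sub, constantCoeff_one, neg_mul, map_mul, coeff_mul_C,
    coeff_succ_X_mul, coeff_zero_eq_constantCoeff] at h1
  linear_combination h1 + 2 * (1 - constantCoeff g) * coeff 1 g * ha

theorem two_mul_one_sub_pow_three_mul_coeff_two :
    2 * (1 - constantCoeff g) ^ 3 * coeff 2 g
      = 3 * constantCoeff g ^ 2 * coeff 1 g + 5 * (1 - constantCoeff g) ^ 2 * coeff 1 g ^ 2 := by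
  have h2 := congrArg (coeff 2) h
  simp only [pow_succ, pow_zero, one_mul, two_mul, coeff_two_mul, map_add, map_mul, map_sub,
    constantCoeff_one, coeff_one_mul, coeff_one, one_ne_zero, ↓reduceIte, zero_sub, neg_mul,
    OfNat.ofNat_ne_zero, mul_neg, neg_neg, coeff_mul_C, coeff_succ_X_mul] at h2
  linear_combination h2 + (2 * (1 - constantCoeff g) * coeff 2 g - coeff 1 g ^ 2) * ha

variable (hw : (1 - constantCoeff g) * w = 1)
include hw

theorem coeff_one_eq : coeff 1 g = (1 / 2 : k) • (constantCoeff g ^ 3 * w ^ 3) := by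
  have hb := h.two_mul_one_sub_pow_three_mul_coeff_one ha
  rw [← half_smul_two_mul (k := k) (coeff 1 g)]
  congr 1
  linear_combination w ^ 3 * hb
    - 2 * coeff 1 g * (((1 - constantCoeff g) * w) ^ 2 + (1 - constantCoeff g) * w + 1) * hw

theorem coeff_two_eq : coeff 2 g = (1 / 2 : k) • (coeff 1 g ^ 2 * w)
    + (1 / 2 : k) • (coeff 1 g * constantCoeff g ^ 2 * w ^ 3)
    + coeff 1 g * constantCoeff g ^ 2 * w ^ 4 := by
  have hb : 2 * coeff 1 g = constantCoeff g ^ 3 * w ^ 3 := by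
    rw [h.coeff_one_eq (k := k) ha hw, two_mul_half_smul]
  have hc := h.two_mul_one_sub_pow_three_mul_coeff_two ha
  set a := constantCoeff g
  set b := coeff 1 g
  calc coeff 2 g = (1 / 2 : k) • (2 * coeff 2 g) := (half_smul_two_mul _).symm
    _ = (1 / 2 : k) • (b ^ 2 * w + b * a ^ 2 * w ^ 3 + 2 * (b * a ^ 2 * w ^ 4)) := by
      congr 1
      linear_combination w ^ 3 * hc + 2 * b * w * hb + (-2 * coeff 2 g * (((1 - a) * w) ^ 2
        + (1 - a) * w + 1) + 5 * b ^ 2 * w * ((1 - a) * w + 1) - 2 * b * a ^ 2 * w ^ 3) * hw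
    _ = _ := by rw [smul_add, smul_add, half_smul_two_mul]

end GalledTreeEquation

/-- For every `n ≥ 0`, the coefficient of `tⁿu²` in the bivariate generating function
`G` of leaf-labeled time-consistent galled trees equals the coefficient of `tⁿ` in
`E2 := (1/2)·E1²·(1-U)⁻¹ + (1/2)·E1·U²·(1-U)⁻³ + E1·U²·(1-U)⁻⁴`, the EGF of those
with exactly two galls.  Here `U` is the unique series in `ℚ[[t]]` with zero constant
coefficient satisfying `U = t + U²/2`, `E1 := (1/2)·U³·(1-U)⁻³`, and `G` is the
unique series in `ℚ[[t,u]]` with zero constant coefficient satisfying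
`G = t + G²/2 + (u·G/2)·(G·(1-G)⁻¹)²`. -/
theorem stmt_11 (U E1 E2 : PowerSeries ℚ) (hU0 : PowerSeries.constantCoeff U = 0)
    (hU : U = PowerSeries.X + (1 / 2 : ℚ) • U ^ 2)
    (hE1 : E1 = (1 / 2 : ℚ) • (U ^ 3 * ((1 - U)⁻¹) ^ 3))
    (hE2 : E2 = (1 / 2 : ℚ) • (E1 ^ 2 * (1 - U)⁻¹)
        + (1 / 2 : ℚ) • (E1 * U ^ 2 * ((1 - U)⁻¹) ^ 3)
        + E1 * U ^ 2 * ((1 - U)⁻¹) ^ 4)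
    (G : MvPowerSeries (Fin 2) ℚ) (hG0 : MvPowerSeries.constantCoeff G = 0)
    (hG : G = MvPowerSeries.X 0 + (1 / 2 : ℚ) • G ^ 2
        + ((1 / 2 : ℚ) • (MvPowerSeries.X 1 * G)) * (G * (1 - G)⁻¹) ^ 2) :
    ∀ n : ℕ,
      MvPowerSeries.coeff (Finsupp.single 0 n + Finsupp.single 1 2) G
        = PowerSeries.coeff n E2 := by
  intro n
  set g := MvPowerSeries.finTwoToIterated ℚ G
  have hg : GalledTreeEquation (C X) X g := by
    simpa [MvPowerSeries.finTwoToIterated_X_zero, MvPowerSeries.finTwoToIterated_X_one] using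
      (galledTreeEquation_of_eq hG0 hG).map (MvPowerSeries.finTwoToIterated ℚ).toRingHom
  have hg0 : constantCoeff (constantCoeff g) = 0 := by
    rw [MvPowerSeries.constantCoeff_constantCoeff_finTwoToIterated, hG0]
  have ha : 2 * constantCoeff g = 2 * X + constantCoeff g ^ 2 :=
    hg.constantCoeff_eq (isUnit_iff_constantCoeff.2 (by simp [hg0]))
  obtain rfl : constantCoeff g = U :=
    eq_of_two_mul_eq_add_sq hg0 hU0 ha
      (by linear_combination 2 * hU + two_mul_half_smul (k := ℚ) (U ^ 2))
  have hw : (1 - constantCoeff g) * (1 - constantCoeff g)⁻¹ = 1 :=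
    PowerSeries.mul_inv_cancel _ (by simp [hg0])
  obtain rfl : coeff 1 g = E1 := by rw [hE1]; exact hg.coeff_one_eq ha hw
  rw [← MvPowerSeries.coeff_coeff_finTwoToIterated, hE2, ← hg.coeff_two_eq ha hw]
end

section
/- The numbers e_{n,g} := n!·(coefficient of tⁿuᵍ in G) satisfy e_{1,0} = 1, e_{1,g} = 0 for g ≥ 1, and for all n ≥ 2 and g ≥ 0 the recursion e_{n,g} = (1/2)·[ Σ_{m=1}^{n−1} C(n, m)·Σ_{ℓ=0}^{g} e_{m,ℓ}·e_{n−m,g−ℓ} + Σ_{k=3}^{n} (k − 2)·Σ_{c ∈ C(n,k)} Σ_{d ∈ C(g−1+k,k)} multinomial(n; c₁, …, c_k)·Π_{i=1}^{k} e_{c_i, d_i − 1} ], where C(n, k) denotes the set of compositions of n into k positive parts and multinomial(n; c₁, …, c_k) = n!/(c₁!·⋯·c_k!). -/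
/-!
Read `G` as exponential in `t` and ordinary in `u`: then `e n g` is the coefficient of `tⁿuᵍ`,
and products of series become binomial (resp. multinomial) convolutions. Writing the functional
equation as `G · (1 - h) = t` with `h(0) = 0` shows `t ∣ G`. Hence in `t`-degree `n` the term
`G · (G/(1-G))² = ∑_{k ≥ 3} (k - 2) Gᵏ` may be truncated at `k = n`, and in `Gᵏ` only
compositions of `n` into positive parts contribute. The factor `u` shifts the `u`-exponents by
one, which turns the compositions of `g - 1` into nonnegative parts into the compositions of
`g - 1 + k`.
-/

open MvPowerSeries Finset Finset.Nat
open scoped Nat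

/-- Truncation of `x³ / (1 - x)² = ∑_{k ≥ 3} (k - 2) xᵏ`, with `y = (1 - x)⁻¹`. -/
theorem mul_mul_sq_eq_sum_Icc_add {A : Type*} [CommRing A] {x y : A} (hxy : (1 - x) * y = 1)
    {n : ℕ} (hn : 1 ≤ n) :
    x * (x * y) ^ 2 = ∑ k ∈ Icc 3 n, ((k : A) - 2) * x ^ k
      + x ^ (n + 1) * ((n - 1) - (n - 2) * x) * y ^ 2 := by
  induction n, hn using Nat.le_induction with
  | base =>
    rw [Icc_eq_empty_of_lt (by norm_num), sum_empty]
    push_cast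
    ring
  | succ n hn ih =>
    obtain rfl | hn := hn.eq_or_lt
    · rw [Icc_eq_empty_of_lt (by norm_num), sum_empty]
      push_cast
      ring
    rw [sum_Icc_succ_top (by omega), ih]
    push_cast
    linear_combination ((n : A) - 1) * x ^ (n + 1) * (1 + (1 - x) * y) * hxy

namespace MvPowerSeries

theorem X_dvd_of_eq_X_add_mul {σ R : Type*} [CommRing R] {f h : MvPowerSeries σ R} (i : σ)
    (hh : constantCoeff h = 0) (hf : f = X i + f * h) : X i ∣ f := by
  have hu : IsUnit (1 - h) := isUnit_iff_constantCoeff.mpr (by simp [hh])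
  have hX : f * (1 - h) = X i := by linear_combination hf
  exact hu.dvd_mul_right.mp (hX ▸ dvd_rfl)

theorem coeff_mul_mul_inv_sq {σ k : Type*} [Field k] {f : MvPowerSeries σ k} {i : σ}
    (hf : X i ∣ f) {d : σ →₀ ℕ} (hd : 1 ≤ d i) :
    coeff d (f * (f * (1 - f)⁻¹) ^ 2)
      = ∑ j ∈ Icc 3 (d i), ((j : k) - 2) * coeff d (f ^ j) := by
  have hf0 : constantCoeff f = 0 := by
    obtain ⟨g, rfl⟩ := hf
    simp
  have hinv : (1 - f) * (1 - f)⁻¹ = 1 := MvPowerSeries.mul_inv_cancel _ (by simp [hf0])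
  have hrem : X i ^ (d i + 1) ∣ f ^ (d i + 1) * (((d i : MvPowerSeries σ k) - 1)
      - ((d i : MvPowerSeries σ k) - 2) * f) * (1 - f)⁻¹ ^ 2 :=
    (pow_dvd_pow_of_dvd hf _).mul_right _ |>.mul_right _
  rw [mul_mul_sq_eq_sum_Icc_add hinv hd, map_add, X_pow_dvd_iff.mp hrem d (by omega), add_zero,
    map_sum]
  refine sum_congr rfl fun j _ => ?_
  rw [show ((j : MvPowerSeries σ k) - 2) = C ((j : k) - 2) by
    rw [map_sub, map_natCast, map_ofNat], coeff_C_mul]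

end MvPowerSeries

namespace Finset.Nat

def compositions (n k : ℕ) : Finset (Fin k → ℕ) :=
  (antidiagonalTuple k n).filter fun c => ∀ i, 0 < c i

lemma compositions_eq_empty {n k : ℕ} (h : n < k) : compositions n k = ∅ := by
  refine filter_eq_empty_iff.mpr fun c hc hpos => ?_
  have : ∑ _i : Fin k, 1 ≤ ∑ i, c i := sum_le_sum fun i _ => hpos i
  simp only [sum_const, card_univ, Fintype.card_fin, smul_eq_mul, mul_one,
    mem_antidiagonalTuple.mp hc] at this
  omega

lemma sum_compositions_add_eq_sum_antidiagonalTuple {M : Type*} [AddCommMonoid M]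
    (m k : ℕ) (F : (Fin k → ℕ) → M) :
    ∑ c ∈ compositions (m + k) k, F c = ∑ d ∈ antidiagonalTuple k m, F (d + 1) := by
  have hshift : ∀ c ∈ compositions (m + k) k, c - 1 + 1 = c := fun c hc =>
    funext fun i => Nat.sub_add_cancel ((mem_filter.mp hc).2 i)
  refine sum_nbij' (· - 1) (· + 1) (fun c hc => ?_) (fun d hd => ?_) hshift
    (fun d _ => by ext; simp) (fun c hc => by rw [hshift c hc])
  · simp only [compositions, mem_filter, mem_antidiagonalTuple] at hc ⊢
    have h : ∑ i, (c i - 1 + 1) = m + k :=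
      hc.1 ▸ sum_congr rfl fun i _ => Nat.sub_add_cancel (hc.2 i)
    simpa [sum_add_distrib] using h
  · simp only [compositions, mem_filter, mem_antidiagonalTuple] at hd ⊢
    simp [sum_add_distrib, hd]

end Finset.Nat

namespace Bivariate

variable {R : Type*} [CommSemiring R]

/-- The exponent of `tⁿ uᵍ`, with `t = X 0` and `u = X 1`. -/
noncomputable abbrev bideg (n g : ℕ) : Fin 2 →₀ ℕ := Finsupp.single 0 n + Finsupp.single 1 g

@[simp] lemma bideg_apply_zero (n g : ℕ) : bideg n g 0 = n := by simp

@[simp] lemma bideg_apply_one (n g : ℕ) : bideg n g 1 = g := by simp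

lemma bideg_apply_self (d : Fin 2 →₀ ℕ) : bideg (d 0) (d 1) = d := by
  ext i; fin_cases i <;> simp

lemma bideg_add (a b c d : ℕ) : bideg a b + bideg c d = bideg (a + c) (b + d) := by
  ext i; fin_cases i <;> simp

lemma coeff_bideg_mul (f f' : MvPowerSeries (Fin 2) R) (n g : ℕ) :
    coeff (bideg n g) (f * f') = ∑ p ∈ antidiagonal n, ∑ q ∈ antidiagonal g,
      coeff (bideg p.1 q.1) f * coeff (bideg p.2 q.2) f' := by
  rw [coeff_mul, ← sum_product']
  refine sum_nbij' (fun p => ((p.1 0, p.2 0), (p.1 1, p.2 1)))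
    (fun pq => (bideg pq.1.1 pq.2.1, bideg pq.1.2 pq.2.2)) ?_ ?_ ?_ ?_ ?_
  · rintro ⟨a, b⟩ h
    have h0 := DFunLike.congr_fun (mem_antidiagonal.mp h) 0
    have h1 := DFunLike.congr_fun (mem_antidiagonal.mp h) 1
    simp only [Finsupp.coe_add, Pi.add_apply, bideg_apply_zero, bideg_apply_one] at h0 h1
    simp [h0, h1]
  · rintro ⟨⟨a, b⟩, c, d⟩ h
    simp_all [bideg_add]
  · rintro ⟨a, b⟩ -
    simp [bideg_apply_self]
  · rintro ⟨⟨a, b⟩, c, d⟩ -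
    simp
  · rintro ⟨a, b⟩ -
    simp [bideg_apply_self]

/-- Coefficients of a series that is exponential in `t` and ordinary in `u`. -/
noncomputable def egfCoeff (f : MvPowerSeries (Fin 2) R) (n g : ℕ) : R :=
  n ! * coeff (bideg n g) f

lemma egfCoeff_X_zero (n g : ℕ) :
    egfCoeff (X 0 : MvPowerSeries (Fin 2) R) n g = if n = 1 ∧ g = 0 then 1 else 0 := by
  have hdeg : bideg n g = Finsupp.single 0 1 ↔ n = 1 ∧ g = 0 := by
    refine ⟨fun h => ⟨?_, ?_⟩, fun ⟨hn, hg⟩ => by simp [hn, hg]⟩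
    · simpa using DFunLike.congr_fun h 0
    · simpa using DFunLike.congr_fun h 1
  rw [egfCoeff, coeff_X]
  simp only [hdeg]
  split_ifs with h
  · simp [h.1]
  · simp

lemma egfCoeff_mul (f f' : MvPowerSeries (Fin 2) R) (n g : ℕ) :
    egfCoeff (f * f') n g = ∑ m ∈ range (n + 1), (n.choose m : R) *
      ∑ ℓ ∈ range (g + 1), egfCoeff f m ℓ * egfCoeff f' (n - m) (g - ℓ) := by
  rw [egfCoeff, coeff_bideg_mul, sum_antidiagonal_eq_sum_range_succ_mk, mul_sum]
  refine sum_congr rfl fun m hm => ?_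
  rw [sum_antidiagonal_eq_sum_range_succ_mk, mul_sum, mul_sum]
  refine sum_congr rfl fun ℓ _ => ?_
  have hfac : (n.choose m : R) * m ! * (n - m)! = n ! := by
    exact_mod_cast congrArg (Nat.cast (R := R))
      (Nat.choose_mul_factorial_mul_factorial (by simpa [Nat.lt_succ_iff] using hm : m ≤ n))
  simp only [egfCoeff, ← hfac]
  ring

lemma egfCoeff_prod {k : ℕ} (f : Fin k → MvPowerSeries (Fin 2) R) (n g : ℕ) :
    egfCoeff (∏ i, f i) n g = ∑ c ∈ antidiagonalTuple k n, ∑ d ∈ antidiagonalTuple k g,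
      (Nat.multinomial univ c : R) * ∏ i, egfCoeff (f i) (c i) (d i) := by
  classical
  rw [egfCoeff, coeff_prod, mul_sum, ← sum_product']
  refine sum_nbij' (fun l => (fun i => l i 0, fun i => l i 1))
    (fun cd => Finsupp.equivFunOnFinite.symm fun i => bideg (cd.1 i) (cd.2 i)) ?_ ?_ ?_ ?_ ?_
  · intro l hl
    have h := (mem_finsuppAntidiag.mp hl).1
    have h0 := DFunLike.congr_fun h 0
    have h1 := DFunLike.congr_fun h 1
    simp only [Finsupp.finsetSum_apply, bideg_apply_zero, bideg_apply_one] at h0 h1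
    exact mem_product.mpr ⟨mem_antidiagonalTuple.mpr h0, mem_antidiagonalTuple.mpr h1⟩
  · rintro ⟨c, d⟩ h
    simp only [mem_product, mem_antidiagonalTuple] at h
    refine mem_finsuppAntidiag.mpr ⟨?_, by simp⟩
    ext j
    fin_cases j <;> simp [Finsupp.finsetSum_apply, ← h.1, ← h.2]
  · rintro l -
    ext i : 1
    simp [bideg_apply_self]
  · rintro ⟨c, d⟩ -
    simp
  · rintro l hl
    have h := (mem_finsuppAntidiag.mp hl).1
    have h0 := DFunLike.congr_fun h 0
    simp only [Finsupp.finsetSum_apply, bideg_apply_zero] at h0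
    have hmult : (∏ i, ((l i 0)! : R)) * Nat.multinomial univ (fun i => l i 0) = n ! := by
      exact_mod_cast congrArg (Nat.cast (R := R)) (h0 ▸ Nat.multinomial_spec univ fun i => l i 0)
    simp only [egfCoeff, prod_mul_distrib, bideg_apply_self, ← hmult]
    ring

lemma egfCoeff_pow (f : MvPowerSeries (Fin 2) R) (k n g : ℕ) :
    egfCoeff (f ^ k) n g = ∑ c ∈ antidiagonalTuple k n, ∑ d ∈ antidiagonalTuple k g,
      (Nat.multinomial univ c : R) * ∏ i, egfCoeff f (c i) (d i) := by
  simpa using egfCoeff_prod (fun _ : Fin k => f) n g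

lemma egfCoeff_X_one_mul_zero (f : MvPowerSeries (Fin 2) R) (n : ℕ) :
    egfCoeff (X 1 * f) n 0 = 0 := by
  rw [egfCoeff, X_dvd_iff.mp (dvd_mul_right _ _) _ (by simp), mul_zero]

lemma egfCoeff_X_one_mul_succ (f : MvPowerSeries (Fin 2) R) (n g : ℕ) :
    egfCoeff (X 1 * f) n (g + 1) = egfCoeff f n g := by
  have hdeg : bideg n (g + 1) - Finsupp.single 1 1 = bideg n g := by
    ext i; fin_cases i <;> simp
  rw [egfCoeff, egfCoeff, X_def, coeff_monomial_mul, if_pos (by simp [Finsupp.single_le_iff]),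
    one_mul, hdeg]

section XZeroDvd

variable {f : MvPowerSeries (Fin 2) R} (hf : X 0 ∣ f)
include hf

lemma egfCoeff_zero_left (g : ℕ) : egfCoeff f 0 g = 0 := by
  rw [egfCoeff, X_dvd_iff.mp hf _ (by simp), mul_zero]

lemma egfCoeff_sq (n g : ℕ) :
    egfCoeff (f ^ 2) n g = ∑ m ∈ Ico 1 n, (n.choose m : R) *
      ∑ ℓ ∈ range (g + 1), egfCoeff f m ℓ * egfCoeff f (n - m) (g - ℓ) := by
  rw [sq, egfCoeff_mul]
  refine (sum_subset (fun m hm => ?_) fun m hm hm' => ?_).symm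
  · simp only [mem_Ico, mem_range] at hm ⊢
    omega
  obtain rfl | rfl : m = 0 ∨ m = n := by
    simp only [mem_range, mem_Ico] at hm hm'
    omega
  all_goals simp [egfCoeff_zero_left hf]

lemma egfCoeff_pow_eq_sum_compositions (k n g : ℕ) :
    egfCoeff (f ^ k) n g = ∑ c ∈ compositions n k, ∑ d ∈ compositions (g + k) k,
      (Nat.multinomial univ c : R) * ∏ i, egfCoeff f (c i) (d i - 1) := by
  rw [egfCoeff_pow, compositions, sum_filter_of_ne]
  · refine sum_congr rfl fun c _ => ?_
    simp [sum_compositions_add_eq_sum_antidiagonalTuple]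
  · intro c _ hc i
    by_contra hci
    refine hc (sum_eq_zero fun d _ => ?_)
    rw [prod_eq_zero (mem_univ i) (by rw [Nat.eq_zero_of_not_pos hci, egfCoeff_zero_left hf]),
      mul_zero]

end XZeroDvd

lemma egfCoeff_mul_mul_inv_sq {k : Type*} [Field k] {f : MvPowerSeries (Fin 2) k}
    (hf : X 0 ∣ f) {n : ℕ} (hn : 1 ≤ n) (g : ℕ) :
    egfCoeff (f * (f * (1 - f)⁻¹) ^ 2) n g
      = ∑ j ∈ Icc 3 n, ((j : k) - 2) * egfCoeff (f ^ j) n g := by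
  rw [egfCoeff, coeff_mul_mul_inv_sq hf (by simpa using hn), bideg_apply_zero, mul_sum]
  exact sum_congr rfl fun j _ => by rw [egfCoeff]; ring

end Bivariate

namespace GalledTree

open Bivariate

variable {G : MvPowerSeries (Fin 2) ℚ} (hG0 : constantCoeff G = 0)
  (hG : G = X 0 + (1 / 2 : ℚ) • G ^ 2 + ((1 / 2 : ℚ) • (X 1 * G)) * (G * (1 - G)⁻¹) ^ 2)
include hG

include hG0 in
lemma X_zero_dvd : X 0 ∣ G := by
  refine X_dvd_of_eq_X_add_mul 0
    (h := C (1 / 2) * G + C (1 / 2) * (X 1 * (G * (1 - G)⁻¹) ^ 2)) (by simp [hG0]) ?_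
  conv_lhs => rw [hG]
  simp only [smul_eq_C_mul]
  ring

lemma egfCoeff_eq_add (n g : ℕ) :
    egfCoeff G n g = egfCoeff (X 0) n g + 1 / 2 * egfCoeff (G ^ 2) n g
      + 1 / 2 * egfCoeff (X 1 * (G * (G * (1 - G)⁻¹) ^ 2)) n g := by
  conv_lhs => rw [egfCoeff, hG]
  simp only [egfCoeff, smul_eq_C_mul, map_add, coeff_C_mul,
    show C (1 / 2 : ℚ) * (X 1 * G) * (G * (1 - G)⁻¹) ^ 2
      = C (1 / 2) * (X 1 * (G * (G * (1 - G)⁻¹) ^ 2)) by ring]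
  ring

include hG0 in
theorem egfCoeff_recursion {n : ℕ} (hn : 1 ≤ n) (g : ℕ) :
    egfCoeff G n g = (if n = 1 ∧ g = 0 then 1 else 0) + 1 / 2 *
      ((∑ m ∈ Ico 1 n, (n.choose m : ℚ) *
          ∑ ℓ ∈ range (g + 1), egfCoeff G m ℓ * egfCoeff G (n - m) (g - ℓ))
        + ∑ k ∈ Icc 3 n, ((k : ℚ) - 2) *
            ∑ c ∈ compositions n k, ∑ d ∈ compositions (g + k - 1) k,
              (Nat.multinomial univ c : ℚ) * ∏ i, egfCoeff G (c i) (d i - 1)) := by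
  have hX := X_zero_dvd hG0 hG
  rw [egfCoeff_eq_add hG, egfCoeff_X_zero, egfCoeff_sq hX]
  cases g with
  | zero =>
    have hB : ∑ k ∈ Icc 3 n, ((k : ℚ) - 2) *
        ∑ c ∈ compositions n k, ∑ d ∈ compositions (0 + k - 1) k,
          (Nat.multinomial univ c : ℚ) * ∏ i, egfCoeff G (c i) (d i - 1) = 0 :=
      sum_eq_zero fun k hk => by
        rw [compositions_eq_empty (by simp only [mem_Icc] at hk; omega : 0 + k - 1 < k)]
        simp
    rw [hB, egfCoeff_X_one_mul_zero]
    ring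
  | succ g =>
    have hdeg (k : ℕ) : g + 1 + k - 1 = g + k := by omega
    simp only [egfCoeff_X_one_mul_succ, egfCoeff_mul_mul_inv_sq hX hn, hdeg,
      egfCoeff_pow_eq_sum_compositions hX]
    ring

end GalledTree

/-- The numbers `e_{n,g} := n!·[tⁿuᵍ]G` (counting leaf-labeled time-consistent galled
trees with `n` leaves and `g` galls) satisfy `e_{1,0} = 1`, `e_{1,g} = 0` for `g ≥ 1`,
and for `n ≥ 2`, `g ≥ 0` the recursion
`e_{n,g} = (1/2)·[ Σ_{m=1}^{n-1} C(n,m)·Σ_{ℓ=0}^{g} e_{m,ℓ}·e_{n-m,g-ℓ}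
  + Σ_{k=3}^{n} (k-2)·Σ_{c ∈ C(n,k)} Σ_{d ∈ C(g-1+k,k)} multinomial(n; c)·Π_i e_{c_i, d_i - 1} ]`,
where `C(n,k)` is the set of compositions of `n` into `k` positive parts.  Here `G` is
the unique series in `ℚ[[t,u]]` with zero constant coefficient satisfying
`G = t + G²/2 + (u·G/2)·(G·(1-G)⁻¹)²`. -/
theorem stmt_12 (G : MvPowerSeries (Fin 2) ℚ)
    (hG0 : MvPowerSeries.constantCoeff (σ := Fin 2) (R := ℚ) G = 0)
    (hG : G = MvPowerSeries.X 0 + (1 / 2 : ℚ) • G ^ 2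
        + ((1 / 2 : ℚ) • (MvPowerSeries.X 1 * G)) * (G * (1 - G)⁻¹) ^ 2)
    (e : ℕ → ℕ → ℚ)
    (he : ∀ n g : ℕ, e n g = (n.factorial : ℚ) *
        MvPowerSeries.coeff (R := ℚ) (Finsupp.single 0 n + Finsupp.single 1 g) G)
    (comps : ℕ → (k : ℕ) → Finset (Fin k → ℕ))
    (hcomps : ∀ n k : ℕ,
      comps n k = (Finset.Nat.antidiagonalTuple k n).filter fun c => ∀ i, 0 < c i) :
    e 1 0 = 1 ∧ (∀ g : ℕ, 1 ≤ g → e 1 g = 0) ∧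
    (∀ n : ℕ, 2 ≤ n → ∀ g : ℕ,
      e n g = (1 / 2) *
        ((∑ m ∈ Finset.Ico 1 n, (n.choose m : ℚ) *
            ∑ ℓ ∈ Finset.range (g + 1), e m ℓ * e (n - m) (g - ℓ))
          + ∑ k ∈ Finset.Icc 3 n, ((k : ℚ) - 2) *
              ∑ c ∈ comps n k, ∑ d ∈ comps (g + k - 1) k,
                (Nat.multinomial Finset.univ c : ℚ) * ∏ i, e (c i) (d i - 1))) := by
  obtain rfl : e = Bivariate.egfCoeff G := funext₂ he
  obtain rfl : comps = compositions := funext₂ hcomps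
  refine ⟨?_, fun g hg => ?_, fun n hn g => ?_⟩
  · simpa using GalledTree.egfCoeff_recursion hG0 hG le_rfl 0
  · simpa [show g ≠ 0 by omega] using GalledTree.egfCoeff_recursion hG0 hG le_rfl g
  · simpa [show n ≠ 1 by omega] using GalledTree.egfCoeff_recursion hG0 hG (by omega : 1 ≤ n) g
end

section
/- The unique solution X ∈ ℚ[[t]] of the functional equation X = 𝒰(t)·X + (𝒰(t)/2)·[(𝒰(t)·(1 − 𝒰(t))⁻¹)² + 𝒰(t²)·(1 − 𝒰(t²))⁻¹] is X = (1/2)·𝒰(t)³·(1 − 𝒰(t))⁻³ + (1/2)·𝒰(t)·𝒰(t²)·(1 − 𝒰(t))⁻¹·(1 − 𝒰(t²))⁻¹; this X is the ordinary generating function ℰ₁ of unlabeled time-consistent galled trees with exactly one gall. -/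
open PowerSeries

/-- `substSq F` is the formal power series `F(t²)` obtained from `F ∈ ℚ[[t]]` by
substituting `t²` for `t`. -/
noncomputable def substSq (F : PowerSeries ℚ) : PowerSeries ℚ :=
  PowerSeries.mk fun n => if 2 ∣ n then PowerSeries.coeff (n / 2) F else 0

namespace PowerSeries

variable {k : Type*} [Field k]

theorem eq_mul_add_iff_eq_mul_inv {a c φ : k⟦X⟧} (ha : constantCoeff a = 0) :
    φ = a * φ + c ↔ φ = c * (1 - a)⁻¹ := by
  rw [eq_mul_inv_iff_mul_eq (by simp [ha])]
  constructor <;> intro h <;> linear_combination h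

end PowerSeries

theorem stmt_15_general (U : PowerSeries ℚ) (h0 : constantCoeff U = 0) :
    ∀ X : PowerSeries ℚ,
      X = U * X + ((1 / 2 : ℚ) • U) *
          ((U * (1 - U)⁻¹) ^ 2 + substSq U * (1 - substSq U)⁻¹) ↔
      X = (1 / 2 : ℚ) • (U ^ 3 * ((1 - U)⁻¹) ^ 3)
          + (1 / 2 : ℚ) • (U * substSq U * (1 - U)⁻¹ * (1 - substSq U)⁻¹) := by
  intro X
  rw [eq_mul_add_iff_eq_mul_inv h0]
  congr! 1
  simp only [smul_eq_C_mul]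
  ring

/-- The unique solution `X ∈ ℚ[[t]]` of the functional equation
`X = 𝒰(t)·X + (𝒰(t)/2)·[(𝒰(t)·(1-𝒰(t))⁻¹)² + 𝒰(t²)·(1-𝒰(t²))⁻¹]` is
`X = (1/2)·𝒰(t)³·(1-𝒰(t))⁻³ + (1/2)·𝒰(t)·𝒰(t²)·(1-𝒰(t))⁻¹·(1-𝒰(t²))⁻¹`, the OGF
`ℰ₁` of unlabeled time-consistent galled trees with exactly one gall.  Here `𝒰` is
the unique series with zero constant coefficient satisfying
`𝒰(t) = t + (1/2)·[𝒰(t)² + 𝒰(t²)]`. -/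
theorem stmt_15 (U : PowerSeries ℚ) (h0 : constantCoeff U = 0)
    (hU : U = PowerSeries.X + (1 / 2 : ℚ) • (U ^ 2 + substSq U)) :
    ∀ X : PowerSeries ℚ,
      X = U * X + ((1 / 2 : ℚ) • U) *
          ((U * (1 - U)⁻¹) ^ 2 + substSq U * (1 - substSq U)⁻¹) ↔
      X = (1 / 2 : ℚ) • (U ^ 3 * ((1 - U)⁻¹) ^ 3)
          + (1 / 2 : ℚ) • (U * substSq U * (1 - U)⁻¹ * (1 - substSq U)⁻¹) :=
  stmt_15_general U h0
end

section
/- There exists a unique formal power series 𝒢 in ℚ[[t, u]] with constant coefficient 0 satisfying 𝒢(t,u) = t + (1/2)·[𝒢(t,u)² + 𝒢(t²,u²)] + (u·𝒢(t,u)/2)·[(𝒢(t,u)·(1 − 𝒢(t,u))⁻¹)² + 𝒢(t²,u²)·(1 − 𝒢(t²,u²))⁻¹], where 𝒢(t²,u²) denotes the substitution of t² for t and u² for u in 𝒢, and 1 − 𝒢(t,u) and 1 − 𝒢(t²,u²) are units since 𝒢 has constant coefficient 0. -/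
/-!
Write `Φ` for the right-hand side of the equation, viewed as a map on series without constant
term. It raises the order of differences: `ord (Φ G - Φ H) ≥ ord (G - H) + 1`, because in
`Φ G - Φ H` the difference `G - H` is multiplied by `G + H` or by `u` (both of order `≥ 1`), or
enters through `G(t², u²) - H(t², u²)`, whose order is `2 · ord (G - H)`. Hence the iterates
`Φᵏ 0` agree with each other up to degree `k`, their coefficientwise limit is a fixed point, and
two fixed points agree up to every degree.
-/

open MvPowerSeries

/-- `substSq2 F` is the bivariate formal power series `F(t², u²)` obtained from
`F ∈ ℚ[[t,u]]` by substituting `t²` for `t` and `u²` for `u`: its coefficient at a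
monomial `t^a u^b` is the coefficient of `t^(a/2) u^(b/2)` in `F` when both `a` and
`b` are even, and `0` otherwise. -/
noncomputable def substSq2 (F : MvPowerSeries (Fin 2) ℚ) : MvPowerSeries (Fin 2) ℚ :=
  fun d =>
    if ∀ i, 2 ∣ d i then
      MvPowerSeries.coeff (d.mapRange (· / 2) (Nat.zero_div 2)) F
    else 0

namespace MvPowerSeries

variable {σ R : Type*}

theorem eq_zero_of_forall_natCast_le_order [Semiring R] {f : MvPowerSeries σ R}
    (h : ∀ n : ℕ, (n : ℕ∞) ≤ f.order) : f = 0 :=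
  order_eq_top_iff.1 (ENat.eq_top_iff_forall_ge.2 h)

section FixedPoint

variable [Ring R] {Φ : MvPowerSeries σ R → MvPowerSeries σ R}

theorem constantCoeff_iterate
    (hΦ₀ : ∀ G, constantCoeff G = 0 → constantCoeff (Φ G) = 0)
    {G : MvPowerSeries σ R} (hG : constantCoeff G = 0) (k : ℕ) :
    constantCoeff (Φ^[k] G) = 0 := by
  induction k with
  | zero => exact hG
  | succ k ih => rw [Function.iterate_succ_apply']; exact hΦ₀ _ ih

theorem natCast_le_order_iterate_sub
    (hΦ₀ : ∀ G, constantCoeff G = 0 → constantCoeff (Φ G) = 0)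
    (hΦ : ∀ G H, constantCoeff G = 0 → constantCoeff H = 0 →
      (G - H).order + 1 ≤ (Φ G - Φ H).order)
    {G H : MvPowerSeries σ R} (hG : constantCoeff G = 0) (hH : constantCoeff H = 0) (k : ℕ) :
    (k : ℕ∞) ≤ (Φ^[k] G - Φ^[k] H).order := by
  induction k with
  | zero => simp
  | succ k ih =>
    rw [Function.iterate_succ_apply', Function.iterate_succ_apply', Nat.cast_succ]
    exact (add_le_add_left ih 1).trans
      (hΦ _ _ (constantCoeff_iterate hΦ₀ hG k) (constantCoeff_iterate hΦ₀ hH k))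

theorem coeff_iterate_zero_eq_of_le
    (hΦ₀ : ∀ G, constantCoeff G = 0 → constantCoeff (Φ G) = 0)
    (hΦ : ∀ G H, constantCoeff G = 0 → constantCoeff H = 0 →
      (G - H).order + 1 ≤ (Φ G - Φ H).order)
    {d : σ →₀ ℕ} {k l : ℕ} (hk : d.degree < k) (hkl : k ≤ l) :
    coeff d (Φ^[l] 0) = coeff d (Φ^[k] 0) := by
  obtain ⟨j, rfl⟩ := Nat.exists_eq_add_of_le hkl
  have hlt : (d.degree : ℕ∞) < (Φ^[k] (Φ^[j] 0) - Φ^[k] 0).order :=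
    (Nat.cast_lt.2 hk).trans_le <| natCast_le_order_iterate_sub hΦ₀ hΦ
      (constantCoeff_iterate hΦ₀ (map_zero _) j) (map_zero _) k
  rw [← sub_eq_zero, ← map_sub, Function.iterate_add_apply]
  exact coeff_of_lt_order hlt

/-- The coefficientwise limit of the iterates `Φ^[k] 0`; for a contracting `Φ` the coefficient
at `d` no longer changes after `d.degree + 1` steps. -/
noncomputable def picardLimit (Φ : MvPowerSeries σ R → MvPowerSeries σ R) : MvPowerSeries σ R :=
  fun d => coeff d (Φ^[d.degree + 1] 0)

theorem coeff_picardLimit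
    (hΦ₀ : ∀ G, constantCoeff G = 0 → constantCoeff (Φ G) = 0)
    (hΦ : ∀ G H, constantCoeff G = 0 → constantCoeff H = 0 →
      (G - H).order + 1 ≤ (Φ G - Φ H).order)
    {d : σ →₀ ℕ} {k : ℕ} (hk : d.degree < k) :
    coeff d (picardLimit Φ) = coeff d (Φ^[k] 0) := by
  change coeff d (Φ^[d.degree + 1] 0) = _
  rcases le_total k (d.degree + 1) with h | h
  · exact coeff_iterate_zero_eq_of_le hΦ₀ hΦ hk h
  · exact (coeff_iterate_zero_eq_of_le hΦ₀ hΦ (Nat.lt_succ_self _) h).symm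

theorem natCast_le_order_picardLimit_sub
    (hΦ₀ : ∀ G, constantCoeff G = 0 → constantCoeff (Φ G) = 0)
    (hΦ : ∀ G H, constantCoeff G = 0 → constantCoeff H = 0 →
      (G - H).order + 1 ≤ (Φ G - Φ H).order) (k : ℕ) :
    (k : ℕ∞) ≤ (picardLimit Φ - Φ^[k] 0).order :=
  nat_le_order fun d hd => by rw [map_sub, coeff_picardLimit hΦ₀ hΦ hd, sub_self]

theorem constantCoeff_picardLimit
    (hΦ₀ : ∀ G, constantCoeff G = 0 → constantCoeff (Φ G) = 0)
    (hΦ : ∀ G H, constantCoeff G = 0 → constantCoeff H = 0 →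
      (G - H).order + 1 ≤ (Φ G - Φ H).order) :
    constantCoeff (picardLimit Φ) = 0 := by
  rw [← coeff_zero_eq_constantCoeff_apply,
    coeff_picardLimit hΦ₀ hΦ (k := 1) (by simp), coeff_zero_eq_constantCoeff_apply]
  exact constantCoeff_iterate hΦ₀ (map_zero _) 1

theorem isFixedPt_picardLimit
    (hΦ₀ : ∀ G, constantCoeff G = 0 → constantCoeff (Φ G) = 0)
    (hΦ : ∀ G H, constantCoeff G = 0 → constantCoeff H = 0 →
      (G - H).order + 1 ≤ (Φ G - Φ H).order) :
    Function.IsFixedPt Φ (picardLimit Φ) := by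
  refine sub_eq_zero.1 (eq_zero_of_forall_natCast_le_order fun k => ?_)
  have hstep : (k + 1 : ℕ∞) ≤ (Φ (picardLimit Φ) - Φ (Φ^[k] 0)).order :=
    (add_le_add_left (natCast_le_order_picardLimit_sub hΦ₀ hΦ k) 1).trans
      (hΦ _ _ (constantCoeff_picardLimit hΦ₀ hΦ) (constantCoeff_iterate hΦ₀ (map_zero _) k))
  have hlim : (k + 1 : ℕ∞) ≤ (Φ^[k + 1] 0 - picardLimit Φ).order := by
    rw [← neg_sub, order_neg]; exact_mod_cast natCast_le_order_picardLimit_sub hΦ₀ hΦ (k + 1)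
  have hsplit : Φ (picardLimit Φ) - picardLimit Φ =
      (Φ (picardLimit Φ) - Φ (Φ^[k] 0)) + (Φ^[k + 1] 0 - picardLimit Φ) := by
    rw [Function.iterate_succ_apply']; abel
  rw [hsplit]
  exact (le_self_add.trans (le_min hstep hlim)).trans min_order_le_add

theorem existsUnique_isFixedPt_of_order_sub_add_one_le
    (hΦ₀ : ∀ G, constantCoeff G = 0 → constantCoeff (Φ G) = 0)
    (hΦ : ∀ G H, constantCoeff G = 0 → constantCoeff H = 0 →
      (G - H).order + 1 ≤ (Φ G - Φ H).order) :
    ∃! G, constantCoeff G = 0 ∧ Function.IsFixedPt Φ G := by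
  refine ⟨picardLimit Φ, ⟨constantCoeff_picardLimit hΦ₀ hΦ, isFixedPt_picardLimit hΦ₀ hΦ⟩, ?_⟩
  rintro H ⟨hH₀, hH⟩
  refine sub_eq_zero.1 (eq_zero_of_forall_natCast_le_order fun k => ?_)
  have := natCast_le_order_iterate_sub hΦ₀ hΦ hH₀ (constantCoeff_picardLimit hΦ₀ hΦ) k
  rwa [hH.iterate, (isFixedPt_picardLimit hΦ₀ hΦ).iterate] at this

end FixedPoint

section OrderIdeal

variable [Semiring R]

def orderIdeal (m : ℕ∞) : Ideal (MvPowerSeries σ R) where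
  carrier := {f | m ≤ f.order}
  add_mem' ha hb := (le_min ha hb).trans min_order_le_add
  zero_mem' := by simp
  smul_mem' c _ hf := hf.trans (le_add_self.trans le_order_mul)

@[simp]
theorem mem_orderIdeal {m : ℕ∞} {f : MvPowerSeries σ R} : f ∈ orderIdeal m ↔ m ≤ f.order :=
  Iff.rfl

theorem mul_mem_orderIdeal {a b : ℕ∞} {f g : MvPowerSeries σ R} (hf : f ∈ orderIdeal a)
    (hg : g ∈ orderIdeal b) : f * g ∈ orderIdeal (a + b) :=
  (add_le_add hf hg).trans le_order_mul

end OrderIdeal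

theorem inv_sub_inv_mem {k : Type*} [Field k] {I : Ideal (MvPowerSeries σ k)}
    {φ ψ : MvPowerSeries σ k} (hφ : constantCoeff φ ≠ 0) (hψ : constantCoeff ψ ≠ 0)
    (h : φ - ψ ∈ I) : φ⁻¹ - ψ⁻¹ ∈ I := by
  have hfactor : φ⁻¹ - ψ⁻¹ = φ⁻¹ * -(φ - ψ) * ψ⁻¹ := by
    rw [neg_sub, mul_sub, sub_mul, mul_assoc, MvPowerSeries.mul_inv_cancel ψ hψ,
      MvPowerSeries.inv_mul_cancel φ hφ, mul_one, one_mul]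
  rw [hfactor]
  exact I.mul_mem_right _ (I.mul_mem_left _ (I.neg_mem h))

end MvPowerSeries

theorem substSq2_eq_expand (F : MvPowerSeries (Fin 2) ℚ) :
    substSq2 F = expand 2 two_ne_zero F := by
  ext d
  change (if ∀ i, 2 ∣ d i then coeff (d.mapRange (· / 2) (Nat.zero_div 2)) F else 0) = _
  split_ifs with hd
  · have hhalf : 2 • d.mapRange (· / 2) (Nat.zero_div 2) = d := by
      ext i; simp [Nat.mul_div_cancel' (hd i)]
    conv_rhs => rw [← hhalf]
    rw [coeff_expand_smul]
  · obtain ⟨i, hi⟩ := not_forall.1 hd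
    rw [coeff_expand_of_not_dvd 2 two_ne_zero F hi]

noncomputable def galledTreeMap (G : MvPowerSeries (Fin 2) ℚ) : MvPowerSeries (Fin 2) ℚ :=
  X 0 + (1 / 2 : ℚ) • (G ^ 2 + substSq2 G)
    + ((1 / 2 : ℚ) • (X 1 * G)) * ((G * (1 - G)⁻¹) ^ 2 + substSq2 G * (1 - substSq2 G)⁻¹)

theorem constantCoeff_galledTreeMap {G : MvPowerSeries (Fin 2) ℚ} (hG : constantCoeff G = 0) :
    constantCoeff (galledTreeMap G) = 0 := by
  simp [galledTreeMap, substSq2_eq_expand, smul_eq_C_mul, hG]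

theorem order_sub_add_one_le_order_galledTreeMap_sub {G H : MvPowerSeries (Fin 2) ℚ}
    (hG : constantCoeff G = 0) (hH : constantCoeff H = 0) :
    (G - H).order + 1 ≤ (galledTreeMap G - galledTreeMap H).order := by
  set m := (G - H).order
  set e := expand (σ := Fin 2) (R := ℚ) 2 two_ne_zero
  set K : MvPowerSeries (Fin 2) ℚ → MvPowerSeries (Fin 2) ℚ :=
    fun F => (F * (1 - F)⁻¹) ^ 2 + e F * (1 - e F)⁻¹
  have hdecomp : galledTreeMap G - galledTreeMap H =
      (1 / 2 : ℚ) • ((G + H) * (G - H) + e (G - H) + X 1 * (G * K G - H * K H)) := by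
    simp only [galledTreeMap, substSq2_eq_expand, map_sub, K, e, smul_eq_C_mul]
    ring
  have hm : 1 ≤ m := one_le_order_iff_constCoeff_eq_zero.2 (by simp [hG, hH])
  have hGH : G - H ∈ orderIdeal m := mem_orderIdeal.2 le_rfl
  have heGH : e G - e H ∈ orderIdeal m := by
    rw [← map_sub, mem_orderIdeal, order_expand, two_nsmul]
    exact le_add_self
  -- `K F` is a ring expression in `F`, `e F`, `(1 - F)⁻¹` and `(1 - e F)⁻¹`, each of which is
  -- congruent modulo `orderIdeal m` to its counterpart for `H`
  have hK : G * K G - H * K H ∈ orderIdeal m := by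
    have hinv : ∀ {F F' : MvPowerSeries (Fin 2) ℚ}, constantCoeff F = 0 → constantCoeff F' = 0 →
        F - F' ∈ orderIdeal m → (1 - F)⁻¹ - (1 - F')⁻¹ ∈ orderIdeal m := fun hF hF' h =>
      inv_sub_inv_mem (by simp [hF]) (by simp [hF'])
        (by rw [sub_sub_sub_cancel_left, ← neg_sub]; exact neg_mem h)
    have heG : constantCoeff (e G) = 0 := by simp [e, hG]
    have heH : constantCoeff (e H) = 0 := by simp [e, hH]
    rw [← Ideal.Quotient.eq]
    simp only [K, map_mul, map_add, map_pow, Ideal.Quotient.eq.2 hGH, Ideal.Quotient.eq.2 heGH,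
      Ideal.Quotient.eq.2 (hinv hG hH hGH), Ideal.Quotient.eq.2 (hinv heG heH heGH)]
  have hsq : (G + H) * (G - H) ∈ orderIdeal (m + 1) := by
    rw [add_comm]
    exact mul_mem_orderIdeal (one_le_order_iff_constCoeff_eq_zero.2 (by simp [hG, hH])) hGH
  have hexp : e (G - H) ∈ orderIdeal (m + 1) := by
    rw [mem_orderIdeal, order_expand, two_nsmul]
    exact add_le_add_right hm m
  have hu : X 1 * (G * K G - H * K H) ∈ orderIdeal (m + 1) := by
    rw [add_comm]
    exact mul_mem_orderIdeal (one_le_order_iff_constCoeff_eq_zero.2 (constantCoeff_X 1)) hK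
  rw [← mem_orderIdeal, hdecomp]
  exact Submodule.smul_of_tower_mem _ _ (add_mem (add_mem hsq hexp) hu)

/-- There exists a unique bivariate formal power series `𝒢 ∈ ℚ[[t,u]]` (with
`t = X 0`, `u = X 1`) with constant coefficient `0` satisfying
`𝒢(t,u) = t + (1/2)·[𝒢(t,u)² + 𝒢(t²,u²)]
  + (u·𝒢(t,u)/2)·[(𝒢(t,u)·(1-𝒢(t,u))⁻¹)² + 𝒢(t²,u²)·(1-𝒢(t²,u²))⁻¹]`. -/
theorem stmt_19 :
    ∃! G : MvPowerSeries (Fin 2) ℚ, constantCoeff G = 0 ∧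
      G = MvPowerSeries.X 0 + (1 / 2 : ℚ) • (G ^ 2 + substSq2 G)
          + ((1 / 2 : ℚ) • (MvPowerSeries.X 1 * G)) *
              ((G * (1 - G)⁻¹) ^ 2 + substSq2 G * (1 - substSq2 G)⁻¹) := by
  obtain ⟨G, ⟨hG₀, hG⟩, huniq⟩ := existsUnique_isFixedPt_of_order_sub_add_one_le
    (fun _ => constantCoeff_galledTreeMap)
    (fun _ _ => order_sub_add_one_le_order_galledTreeMap_sub)
  exact ⟨G, ⟨hG₀, hG.symm⟩, fun H ⟨hH₀, hH⟩ => huniq H ⟨hH₀, hH.symm⟩⟩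
end
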